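/- arXiv:2406.19697 — 12 statements merged into one kernel-verified Lean document; each statement's English description precedes it below -/
import Mathlib

section
/- Let E be a finite set and F a nonempty family of subsets of E. Then F satisfies the simultaneous exchange property (†) if and only if F is an M♮-convex set. -/
namespace OrdConc

variable {E : Type*} [DecidableEq E]

/-- Membership of an optional element in a finite set: the extra symbol `∅`
(encoded as `none`) always counts as a member of `S ∪ {∅}`. -/
def mem? (x : Option E) (S : Finset E) : Prop :=
  ∀ a : E, x = some a → a ∈ S

/-- `X − x` (no-op when `x = none`, i.e. the symbol `∅`). -/
def rem (X : Finset E) (x : Option E) : Finset E :=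
  x.elim X fun a => X.erase a

/-- `X + x` (no-op when `x = none`, i.e. the symbol `∅`). -/
def add (X : Finset E) (x : Option E) : Finset E :=
  x.elim X fun a => insert a X

/-- `X − x + x'`. -/
def move (X : Finset E) (x x' : Option E) : Finset E :=
  add (rem X x) x'

/-- Ordinal concavity (Definition 1). -/
def OrdinalConcave (u : Finset E → ℝ) : Prop :=
  ∀ X X' : Finset E, ∀ x ∈ X \ X', ∃ x' : Option E, mem? x' (X' \ X) ∧
    (u X < u (move X (some x) x') ∨
     u X' < u (move X' x' (some x)) ∨
     (u X = u (move X (some x) x') ∧ u X' = u (move X' x' (some x))))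

/-- Ordinal weak-concavity (Definition 2). -/
def OrdinalWeakConcave (u : Finset E → ℝ) : Prop :=
  ∀ X X' : Finset E, X ≠ X' → ∃ x x' : Option E, x ≠ x' ∧
    mem? x (X \ X') ∧ mem? x' (X' \ X) ∧
    (u X < u (move X x x') ∨
     u X' < u (move X' x' x) ∨
     (u X = u (move X x x') ∧ u X' = u (move X' x' x)))

/-- An M♮-convex set (family) of subsets of `E`. -/
def MnatConvex (F : Set (Finset E)) : Prop :=
  ∀ X ∈ F, ∀ X' ∈ F, ∀ x ∈ X \ X', ∃ x' : Option E, mem? x' (X' \ X) ∧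
    move X (some x) x' ∈ F ∧ move X' x' (some x) ∈ F

/-- The simultaneous exchange property (†). -/
def Dagger (F : Set (Finset E)) : Prop :=
  ∀ X ∈ F, ∀ X' ∈ F, X ≠ X' → ∃ x x' : Option E, x ≠ x' ∧
    mem? x (X \ X') ∧ mem? x' (X' \ X) ∧
    move X x x' ∈ F ∧ move X' x' x ∈ F

/-- `D*_u`, the family of global maximizers of `u`. -/
def Dstar (u : Finset E → ℝ) : Set (Finset E) :=
  {X | ∀ Z : Finset E, u Z ≤ u X}

/-- The neighborhood `N(X)`. -/
def Nbhd [Fintype E] (X : Finset E) : Set (Finset E) :=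
  {Z | ∃ x x' : Option E, mem? x X ∧ mem? x' (Finset.univ \ X) ∧ Z = move X x x'}

/-- The interval `[X, Y]` in `2^E`. -/
def Interval (X Y : Finset E) : Set (Finset E) :=
  {Z | X ⊆ Z ∧ Z ⊆ Y}

/-- `C_u(X,Y)`, the maximizers of `u` over the interval `[X,Y]`. -/
def CuI (u : Finset E → ℝ) (X Y : Finset E) : Set (Finset E) :=
  {Z | Z ∈ Interval X Y ∧ ∀ W ∈ Interval X Y, u W ≤ u Z}

/-- `C_u(X)`, the maximizers of `u` among all subsets of `X`. -/
def Cu (u : Finset E → ℝ) (X : Finset E) : Set (Finset E) :=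
  {Z | Z ⊆ X ∧ ∀ W ⊆ X, u W ≤ u Z}

/-- Cardinality of the symmetric difference `X Δ Z`. -/
def sdCard (X Z : Finset E) : ℕ := (X \ Z ∪ Z \ X).card

/-- The strict lexicographic order on `ℝ²`. -/
def lexLt (p q : ℝ × ℝ) : Prop := p.1 < q.1 ∨ (p.1 = q.1 ∧ p.2 < q.2)

/-- The (non-strict) lexicographic order on `ℝ²`. -/
def lexLe (p q : ℝ × ℝ) : Prop := lexLt p q ∨ p = q


/-! ### Auxiliary development for `dagger_iff_mnatConvex` -/

set_option linter.unusedSectionVars false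

section Aux

variable {E : Type*} [DecidableEq E]

lemma mem?_none (S : Finset E) : mem? (none : Option E) S := by
  intro a h; cases h

lemma mem?_some {a : E} {S : Finset E} : mem? (some a) S ↔ a ∈ S := by
  constructor
  · intro h; exact h a rfl
  · intro h b hb; cases hb; exact h

@[simp] lemma move_none_none (S : Finset E) : move S none none = S := rfl
@[simp] lemma move_some_none (S : Finset E) (a : E) : move S (some a) none = S.erase a := rfl
@[simp] lemma move_none_some (S : Finset E) (b : E) : move S none (some b) = insert b S := rfl
@[simp] lemma move_some_some (S : Finset E) (a b : E) :
    move S (some a) (some b) = insert b (S.erase a) := rfl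

/-- Internal exchange predicate, without `Option`. -/
def exc (G : Set (Finset E)) (S T : Finset E) (e : E) : Prop :=
  (S.erase e ∈ G ∧ insert e T ∈ G) ∨
  (∃ w ∈ T \ S, insert w (S.erase e) ∈ G ∧ insert e (T.erase w) ∈ G)

lemma exc_iff {G : Set (Finset E)} {S T : Finset E} {e : E} :
    exc G S T e ↔
    ∃ v : Option E, mem? v (T \ S) ∧ move S (some e) v ∈ G ∧ move T v (some e) ∈ G := by
  constructor
  · rintro (⟨h1, h2⟩ | ⟨w, hw, h1, h2⟩)
    · exact ⟨none, mem?_none _, h1, h2⟩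
    · exact ⟨some w, mem?_some.2 hw, h1, h2⟩
  · rintro ⟨v, hv, h1, h2⟩
    cases v with
    | none => exact Or.inl ⟨h1, h2⟩
    | some w => exact Or.inr ⟨w, mem?_some.1 hv, h1, h2⟩

/-- Eliminator for the simultaneous exchange property into three concrete shapes. -/
lemma dagger_cases {G : Set (Finset E)} (hD : Dagger G) {S T : Finset E}
    (hS : S ∈ G) (hT : T ∈ G) (hne : S ≠ T) :
    (∃ a ∈ S \ T, S.erase a ∈ G ∧ insert a T ∈ G) ∨
    (∃ b ∈ T \ S, insert b S ∈ G ∧ T.erase b ∈ G) ∨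
    (∃ a ∈ S \ T, ∃ b ∈ T \ S, insert b (S.erase a) ∈ G ∧ insert a (T.erase b) ∈ G) := by
  obtain ⟨y, y', hyy', hy, hy', h1, h2⟩ := hD S hS T hT hne
  cases y with
  | none =>
    cases y' with
    | none => exact absurd rfl hyy'
    | some b =>
      refine Or.inr (Or.inl ⟨b, mem?_some.1 hy', ?_, ?_⟩) <;> simpa using ‹_›
  | some a =>
    cases y' with
    | none => exact Or.inl ⟨a, mem?_some.1 hy, by simpa using h1, by simpa using h2⟩
    | some b =>
      exact Or.inr (Or.inr ⟨a, mem?_some.1 hy, b, mem?_some.1 hy', by simpa using h1,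
        by simpa using h2⟩)

/-- Constructor for `Dagger` from the three concrete shapes. -/
lemma dagger_of_cases {G : Set (Finset E)}
    (h : ∀ S ∈ G, ∀ T ∈ G, S ≠ T →
      (∃ a ∈ S \ T, S.erase a ∈ G ∧ insert a T ∈ G) ∨
      (∃ b ∈ T \ S, insert b S ∈ G ∧ T.erase b ∈ G) ∨
      (∃ a ∈ S \ T, ∃ b ∈ T \ S, insert b (S.erase a) ∈ G ∧ insert a (T.erase b) ∈ G)) :
    Dagger G := by
  intro S hS T hT hne
  rcases h S hS T hT hne with ⟨a, ha, h1, h2⟩ | ⟨b, hb, h1, h2⟩ | ⟨a, ha, b, hb, h1, h2⟩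
  · exact ⟨some a, none, by simp, mem?_some.2 ha, mem?_none _, by simpa using h1,
      by simpa using h2⟩
  · exact ⟨none, some b, by simp, mem?_none _, mem?_some.2 hb, by simpa using h1,
      by simpa using h2⟩
  · refine ⟨some a, some b, ?_, mem?_some.2 ha, mem?_some.2 hb, by simpa using h1,
      by simpa using h2⟩
    simp only [Ne, Option.some.injEq]
    rintro rfl
    exact (Finset.mem_sdiff.1 hb).2 (Finset.mem_sdiff.1 ha).1

/-- The restriction of a `Dagger` family to an interval is again a `Dagger` family. -/
lemma dagger_interval {G : Set (Finset E)} (hD : Dagger G) (P Q : Finset E) :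
    Dagger {Z | Z ∈ G ∧ P ⊆ Z ∧ Z ⊆ Q} := by
  apply dagger_of_cases
  rintro S ⟨hS, hPS, hSQ⟩ T ⟨hT, hPT, hTQ⟩ hne
  rcases dagger_cases hD hS hT hne with ⟨a, ha, h1, h2⟩ | ⟨b, hb, h1, h2⟩ |
    ⟨a, ha, b, hb, h1, h2⟩
  · rw [Finset.mem_sdiff] at ha
    refine Or.inl ⟨a, Finset.mem_sdiff.2 ha, ⟨h1, ?_, (Finset.erase_subset _ _).trans hSQ⟩,
      ⟨h2, hPT.trans (Finset.subset_insert _ _), Finset.insert_subset (hSQ ha.1) hTQ⟩⟩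
    intro t ht
    exact Finset.mem_erase.2 ⟨fun h => ha.2 (h ▸ hPT ht), hPS ht⟩
  · rw [Finset.mem_sdiff] at hb
    refine Or.inr (Or.inl ⟨b, Finset.mem_sdiff.2 hb, ⟨h1, hPS.trans (Finset.subset_insert _ _),
      Finset.insert_subset (hTQ hb.1) hSQ⟩, ⟨h2, ?_, (Finset.erase_subset _ _).trans hTQ⟩⟩)
    intro t ht
    exact Finset.mem_erase.2 ⟨fun h => hb.2 (h ▸ hPS ht), hPT ht⟩
  · rw [Finset.mem_sdiff] at ha hb
    refine Or.inr (Or.inr ⟨a, Finset.mem_sdiff.2 ha, b, Finset.mem_sdiff.2 hb,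
      ⟨h1, ?_, ?_⟩, ⟨h2, ?_, ?_⟩⟩)
    · intro t ht
      exact Finset.mem_insert_of_mem (Finset.mem_erase.2 ⟨fun h => ha.2 (h ▸ hPT ht), hPS ht⟩)
    · exact Finset.insert_subset (hTQ hb.1) ((Finset.erase_subset _ _).trans hSQ)
    · intro t ht
      exact Finset.mem_insert_of_mem (Finset.mem_erase.2 ⟨fun h => hb.2 (h ▸ hPS ht), hPT ht⟩)
    · exact Finset.insert_subset (hSQ ha.1) ((Finset.erase_subset _ _).trans hTQ)


/-- Complement (within the interval `[X ∩ X', X ∪ X']`). -/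
def compl' (X X' Z : Finset E) : Finset E := (X ∩ X') ∪ ((X ∪ X') \ Z)

lemma compl'_mem {X X' Z : Finset E} : ∀ t, t ∈ compl' X X' Z ↔
    ((t ∈ X ∧ t ∈ X') ∨ ((t ∈ X ∨ t ∈ X') ∧ t ∉ Z)) := by
  intro t
  simp [compl', Finset.mem_union, Finset.mem_inter, Finset.mem_sdiff]

lemma compl'_compl' {X X' Z : Finset E} (h1 : X ∩ X' ⊆ Z) (h2 : Z ⊆ X ∪ X') :
    compl' X X' (compl' X X' Z) = Z := by
  ext t
  have h1t := @h1 t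
  have h2t := @h2 t
  simp only [Finset.mem_inter, Finset.mem_union] at h1t h2t
  simp only [compl'_mem]
  tauto

lemma compl'_interval_left {X X' Z : Finset E} : X ∩ X' ⊆ compl' X X' Z :=
  Finset.subset_union_left

lemma compl'_interval_right {X X' Z : Finset E} : compl' X X' Z ⊆ X ∪ X' := by
  intro t ht
  rcases (compl'_mem t).1 ht with ⟨h, _⟩ | ⟨h, _⟩
  · exact Finset.mem_union_left _ h
  · simpa [Finset.mem_union] using h

lemma compl'_swap {X X' S : Finset E} {a b : E}
    (haU : a ∈ X ∨ a ∈ X') (haI : ¬(a ∈ X ∧ a ∈ X')) (haS : a ∉ S)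
    (hbU : b ∈ X ∨ b ∈ X') (hbS : b ∈ S) (hab : a ≠ b) :
    compl' X X' (insert a (S.erase b)) = insert b ((compl' X X' S).erase a) := by
  ext t
  simp only [compl'_mem, Finset.mem_insert, Finset.mem_erase]
  by_cases hta : t = a
  · subst hta
    constructor
    · rintro (h | ⟨_, hn⟩)
      · exact absurd h haI
      · exact absurd (Or.inl rfl) hn
    · rintro (h | ⟨hn, _⟩)
      · exact absurd h hab
      · exact absurd rfl hn
  · by_cases htb : t = b
    · subst htb
      constructor
      · intro _
        exact Or.inl rfl
      · intro _
        refine Or.inr ⟨hbU, ?_⟩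
        rintro (h | ⟨hn, _⟩)
        · exact hta h
        · exact hn rfl
    · constructor
      · rintro (h | ⟨hu, hn⟩)
        · exact Or.inr ⟨hta, Or.inl h⟩
        · exact Or.inr ⟨hta, Or.inr ⟨hu, fun hS => hn (Or.inr ⟨htb, hS⟩)⟩⟩
      · rintro (h | ⟨_, hi | ⟨hu, hnS⟩⟩)
        · exact absurd h htb
        · exact Or.inl hi
        · refine Or.inr ⟨hu, ?_⟩
          rintro (h' | ⟨_, hS⟩)
          · exact hta h'
          · exact hnS hS

/-- The dual (complemented) family. -/
def dualFam (G : Set (Finset E)) (X X' : Finset E) : Set (Finset E) :=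
  {Z | compl' X X' Z ∈ G ∧ X ∩ X' ⊆ Z ∧ Z ⊆ X ∪ X'}

lemma compl'_erase {X X' Z : Finset E} {a : E} (ha : a ∈ X ∪ X') (ha' : a ∉ X ∩ X')
    (haZ : a ∈ Z) : compl' X X' (Z.erase a) = insert a (compl' X X' Z) := by
  ext t
  by_cases h : t = a
  · subst h
    simp only [compl'_mem, Finset.mem_erase, Finset.mem_insert]
    simp only [Finset.mem_union, Finset.mem_inter] at ha ha'
    tauto
  · simp only [compl'_mem, Finset.mem_erase, Finset.mem_insert, h, false_or]
    tauto

lemma compl'_insert {X X' Z : Finset E} {a : E} (ha : a ∈ X ∪ X') (ha' : a ∉ X ∩ X')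
    (haZ : a ∉ Z) : compl' X X' (insert a Z) = (compl' X X' Z).erase a := by
  ext t
  by_cases h : t = a
  · subst h
    simp only [compl'_mem, Finset.mem_erase, Finset.mem_insert]
    simp only [Finset.mem_union, Finset.mem_inter] at ha ha'
    tauto
  · simp only [compl'_mem, Finset.mem_erase, Finset.mem_insert, h, false_or,
      not_false_iff, true_and]
    tauto

lemma dualFam_dagger {G : Set (Finset E)} (X X' : Finset E)
    (hD : Dagger {Z | Z ∈ G ∧ X ∩ X' ⊆ Z ∧ Z ⊆ X ∪ X'}) :
    Dagger (dualFam {Z | Z ∈ G ∧ X ∩ X' ⊆ Z ∧ Z ⊆ X ∪ X'} X X') := by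
  set G' : Set (Finset E) := {Z | Z ∈ G ∧ X ∩ X' ⊆ Z ∧ Z ⊆ X ∪ X'} with hG'
  apply dagger_of_cases
  rintro S ⟨hCS, hS1, hS2⟩ T ⟨hCT, hT1, hT2⟩ hne
  have hCne : compl' X X' S ≠ compl' X X' T := by
    intro h
    apply hne
    have := congrArg (compl' X X') h
    rwa [compl'_compl' hS1 hS2, compl'_compl' hT1 hT2] at this
  -- membership translations
  have memS : ∀ t, t ∈ compl' X X' S \ compl' X X' T ↔ t ∈ T \ S := by
    intro t
    have h4 := @hT2 t; have h5 := @hS1 t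
    simp only [Finset.mem_inter, Finset.mem_union] at h4 h5
    simp only [Finset.mem_sdiff, compl'_mem]
    constructor
    · rintro ⟨h, h'⟩
      push_neg at h'
      rcases h with ⟨hx, hx'⟩ | ⟨hu, hnS⟩
      · exact (h'.1 hx hx').elim
      · exact ⟨h'.2 hu, hnS⟩
    · rintro ⟨htT, htS⟩
      have hu : t ∈ X ∨ t ∈ X' := h4 htT
      refine ⟨Or.inr ⟨hu, htS⟩, ?_⟩
      rintro (hi | ⟨_, hnT⟩)
      · exact htS (h5 hi)
      · exact hnT htT
  have memT : ∀ t, t ∈ compl' X X' T \ compl' X X' S ↔ t ∈ S \ T := by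
    intro t
    have h4 := @hS2 t; have h5 := @hT1 t
    simp only [Finset.mem_inter, Finset.mem_union] at h4 h5
    simp only [Finset.mem_sdiff, compl'_mem]
    constructor
    · rintro ⟨h, h'⟩
      push_neg at h'
      rcases h with ⟨hx, hx'⟩ | ⟨hu, hnT⟩
      · exact (h'.1 hx hx').elim
      · exact ⟨h'.2 hu, hnT⟩
    · rintro ⟨htS, htT⟩
      have hu : t ∈ X ∨ t ∈ X' := h4 htS
      refine ⟨Or.inr ⟨hu, htT⟩, ?_⟩
      rintro (hi | ⟨_, hnS⟩)
      · exact htT (h5 hi)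
      · exact hnS htS
  -- helper facts for elements of the symmetric difference
  have keyS : ∀ a ∈ S \ T, a ∈ X ∪ X' ∧ a ∉ X ∩ X' := by
    intro a ha
    rw [Finset.mem_sdiff] at ha
    exact ⟨hS2 ha.1, fun h => ha.2 (hT1 h)⟩
  have keyT : ∀ b ∈ T \ S, b ∈ X ∪ X' ∧ b ∉ X ∩ X' := by
    intro b hb
    rw [Finset.mem_sdiff] at hb
    exact ⟨hT2 hb.1, fun h => hb.2 (hS1 h)⟩
  rcases dagger_cases hD hCS hCT hCne with ⟨a, ha, h1, h2⟩ | ⟨b, hb, h1, h2⟩ |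
    ⟨a, ha, b, hb, h1, h2⟩
  -- shape (a, none) on complements, a ∈ T \ S : gives (none, a) for (S,T)
  · rw [memS] at ha
    obtain ⟨haU, haI⟩ := keyT a ha
    rw [Finset.mem_sdiff] at ha
    refine Or.inr (Or.inl ⟨a, Finset.mem_sdiff.2 ha, ⟨?_, hS1.trans (Finset.subset_insert _ _),
      Finset.insert_subset haU hS2⟩, ⟨?_, ?_, (Finset.erase_subset _ _).trans hT2⟩⟩)
    · rwa [compl'_insert haU haI ha.2]
    · rwa [compl'_erase haU haI ha.1]
    · intro t ht
      exact Finset.mem_erase.2 ⟨fun h => haI (h ▸ ht), hT1 ht⟩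
  -- shape (none, b) on complements, b ∈ S \ T : gives (b, none) for (S,T)
  · rw [memT] at hb
    obtain ⟨hbU, hbI⟩ := keyS b hb
    rw [Finset.mem_sdiff] at hb
    refine Or.inl ⟨b, Finset.mem_sdiff.2 hb, ⟨?_, ?_, (Finset.erase_subset _ _).trans hS2⟩,
      ⟨?_, hT1.trans (Finset.subset_insert _ _), Finset.insert_subset hbU hT2⟩⟩
    · rwa [compl'_erase hbU hbI hb.1]
    · intro t ht
      exact Finset.mem_erase.2 ⟨fun h => hbI (h ▸ ht), hS1 ht⟩
    · rwa [compl'_insert hbU hbI hb.2]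
  -- shape (a, b) on complements, a ∈ T \ S, b ∈ S \ T : gives (b, a) for (S, T)
  · rw [memS] at ha
    rw [memT] at hb
    obtain ⟨haU, haI⟩ := keyT a ha
    obtain ⟨hbU, hbI⟩ := keyS b hb
    rw [Finset.mem_sdiff] at ha hb
    have hab : a ≠ b := fun h => ha.2 (h ▸ hb.1)
    refine Or.inr (Or.inr ⟨b, Finset.mem_sdiff.2 hb, a, Finset.mem_sdiff.2 ha, ⟨?_, ?_, ?_⟩,
      ⟨?_, ?_, ?_⟩⟩)
    · have heq : compl' X X' (insert a (S.erase b)) = insert b ((compl' X X' S).erase a) := by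
        refine compl'_swap ?_ ?_ ha.2 ?_ hb.1 hab <;>
          simp only [Finset.mem_union, Finset.mem_inter] at haU haI hbU <;> tauto
      rw [heq]; exact h1
    · intro t ht
      exact Finset.mem_insert_of_mem (Finset.mem_erase.2 ⟨fun h => hbI (h ▸ ht), hS1 ht⟩)
    · exact Finset.insert_subset haU ((Finset.erase_subset _ _).trans hS2)
    · have heq : compl' X X' (insert b (T.erase a)) = insert a ((compl' X X' T).erase b) := by
        refine compl'_swap ?_ ?_ hb.2 ?_ ha.1 hab.symm <;>
          simp only [Finset.mem_union, Finset.mem_inter] at haU haI hbU hbI <;> tauto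
      rw [heq]; exact h2
    · intro t ht
      exact Finset.mem_insert_of_mem (Finset.mem_erase.2 ⟨fun h => haI (h ▸ ht), hT1 ht⟩)
    · exact Finset.insert_subset hbU ((Finset.erase_subset _ _).trans hT2)

/-- Distance strictly decreases inside the interval. -/
lemma interval_card_lt {X X' W : Finset E} (h1 : X ∩ X' ⊆ W) (h2 : W ⊆ X ∪ X')
    (hne : W ≠ X') :
    (X \ W).card + (W \ X).card < (X \ X').card + (X' \ X).card := by
  have hsub1 : X \ W ⊆ X \ X' := by
    intro t ht
    rw [Finset.mem_sdiff] at ht ⊢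
    exact ⟨ht.1, fun h => ht.2 (h1 (Finset.mem_inter.2 ⟨ht.1, h⟩))⟩
  have hsub2 : W \ X ⊆ X' \ X := by
    intro t ht
    rw [Finset.mem_sdiff] at ht ⊢
    rcases Finset.mem_union.1 (h2 ht.1) with h | h
    · exact absurd h ht.2
    · exact ⟨h, ht.2⟩
  have hex : ∃ t, (t ∈ W ∧ t ∉ X') ∨ (t ∈ X' ∧ t ∉ W) := by
    by_contra h
    push_neg at h
    exact hne (Finset.ext fun t => ⟨fun ht => (h t).1 ht, fun ht => (h t).2 ht⟩)
  obtain ⟨t, ht⟩ := hex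
  rcases ht with ⟨htW, htX'⟩ | ⟨htX', htW⟩
  · have htX : t ∈ X := (Finset.mem_union.1 (h2 htW)).resolve_right htX'
    have hss : X \ W ⊂ X \ X' := by
      rw [Finset.ssubset_def]
      refine ⟨hsub1, fun hs => ?_⟩
      exact (Finset.mem_sdiff.1 (hs (Finset.mem_sdiff.2 ⟨htX, htX'⟩))).2 htW
    exact Nat.add_lt_add_of_lt_of_le (Finset.card_lt_card hss) (Finset.card_le_card hsub2)
  · have htX : t ∉ X := fun hX => htW (h1 (Finset.mem_inter.2 ⟨hX, htX'⟩))
    have hss : W \ X ⊂ X' \ X := by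
      rw [Finset.ssubset_def]
      refine ⟨hsub2, fun hs => ?_⟩
      exact htW (Finset.mem_sdiff.1 (hs (Finset.mem_sdiff.2 ⟨htX', htX⟩))).1
    exact Nat.add_lt_add_of_le_of_lt (Finset.card_le_card hsub1) (Finset.card_lt_card hss)

lemma interval_card_lt' {X X' V : Finset E} (h1 : X ∩ X' ⊆ V) (h2 : V ⊆ X ∪ X')
    (hne : V ≠ X) :
    (V \ X').card + (X' \ V).card < (X \ X').card + (X' \ X).card := by
  have := interval_card_lt (X := X') (X' := X) (W := V)
    (by rwa [Finset.inter_comm]) (by rwa [Finset.union_comm]) hne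
  omega


lemma compl'_self {X X' : Finset E} : compl' X X' X = X' := by
  ext t
  rw [compl'_mem]
  constructor
  · rintro (⟨_, h⟩ | ⟨h, hn⟩)
    · exact h
    · exact h.resolve_left hn
  · intro h
    by_cases hX : t ∈ X
    · exact Or.inl ⟨hX, h⟩
    · exact Or.inr ⟨Or.inr h, hX⟩

lemma compl'_self' {X X' : Finset E} : compl' X X' X' = X := by
  ext t
  rw [compl'_mem]
  constructor
  · rintro (⟨h, _⟩ | ⟨h, hn⟩)
    · exact h
    · exact h.resolve_right hn
  · intro h
    by_cases hX : t ∈ X'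
    · exact Or.inl ⟨h, hX⟩
    · exact Or.inr ⟨Or.inl h, hX⟩

lemma compl'_erase_self' {X X' : Finset E} {w : E} (hw : w ∈ X' \ X) :
    compl' X X' (X'.erase w) = insert w X := by
  rw [Finset.mem_sdiff] at hw
  rw [compl'_erase (Finset.mem_union_right _ hw.1)
    (fun h => hw.2 (Finset.mem_inter.1 h).1) hw.1, compl'_self']

lemma compl'_witness' {X X' : Finset E} {e w : E} (he : e ∈ X \ X') (hw : w ∈ X' \ X) :
    compl' X X' (insert e (X'.erase w)) = insert w (X.erase e) := by
  rw [Finset.mem_sdiff] at he hw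
  have hew : e ≠ w := fun h => he.2 (h ▸ hw.1)
  rw [compl'_swap (Or.inl he.1) (fun h => he.2 h.2) he.2 (Or.inr hw.1) hw.1 hew, compl'_self']

lemma compl'_erase_self {X X' : Finset E} {e : E} (he : e ∈ X \ X') :
    compl' X X' (X.erase e) = insert e X' := by
  rw [Finset.mem_sdiff] at he
  rw [compl'_erase (Finset.mem_union_left _ he.1)
    (fun h => he.2 (Finset.mem_inter.1 h).2) he.1, compl'_self]

lemma compl'_witness {X X' : Finset E} {e w : E} (he : e ∈ X \ X') (hw : w ∈ X' \ X) :
    compl' X X' (insert w (X.erase e)) = insert e (X'.erase w) := by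
  rw [Finset.mem_sdiff] at he hw
  have hwe : w ≠ e := fun h => hw.2 (h ▸ he.1)
  rw [compl'_swap (Or.inr hw.1) (fun h => hw.2 h.1) hw.2 (Or.inl he.1) he.1 hwe, compl'_self]

lemma mem_move {S : Finset E} {p q : Option E} {t : E} :
    t ∈ move S p q ↔ (q = some t ∨ (t ∈ S ∧ p ≠ some t)) := by
  rcases p with _ | a <;> rcases q with _ | b <;>
    simp [move, rem, add, Finset.mem_insert, Finset.mem_erase, and_comm, eq_comm] <;>
    tauto

/-- The key combinatorial lemma (one half of the simultaneous-exchange argument). -/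
lemma CL {G : Set (Finset E)} {X X' : Finset E} {x : E}
    (hX : X ∈ G) (hX' : X' ∈ G) (hx : x ∈ X \ X')
    (hD : Dagger G)
    (hint : ∀ Z ∈ G, X ∩ X' ⊆ Z ∧ Z ⊆ X ∪ X')
    (hIH : ∀ S ∈ G, ∀ T ∈ G,
      (S \ T).card + (T \ S).card < (X \ X').card + (X' \ X).card →
      ∀ e ∈ S \ T, exc G S T e) :
    X.erase x ∈ G ∨ ∃ w ∈ X' \ X, insert w (X.erase x) ∈ G ∧ insert x (X'.erase w) ∈ G := by
  classical
  by_contra hcon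
  push_neg at hcon
  obtain ⟨hnE, hnW⟩ := hcon
  obtain ⟨hxX, hxX'⟩ := Finset.mem_sdiff.1 hx
  have hXne : X ≠ X' := fun h => hxX' (h ▸ hxX)
  -- Lemma 1 : exchange x out of X against any W ∈ G with x ∉ W, W ≠ X'
  have lemma1 : ∀ W ∈ G, x ∉ W → W ≠ X' → exc G X W x := by
    intro W hW hxW hWne
    obtain ⟨hi1, hi2⟩ := hint W hW
    exact hIH X hX W hW (interval_card_lt hi1 hi2 hWne) x (Finset.mem_sdiff.2 ⟨hxX, hxW⟩)
  -- Lemma 2 : exchange x from any V ∈ G with x ∈ V, V ≠ X, against X'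
  have lemma2 : ∀ V ∈ G, x ∈ V → V ≠ X → exc G V X' x := by
    intro V hV hxV hVne
    obtain ⟨hi1, hi2⟩ := hint V hV
    exact hIH V hV X' hX' (interval_card_lt' hi1 hi2 hVne) x (Finset.mem_sdiff.2 ⟨hxV, hxX'⟩)
  -- members of G lie in the interval
  have hmemB : ∀ W ∈ G, ∀ t, t ∈ W → t ∉ X → t ∈ X' \ X := by
    intro W hW t htW htX
    rcases Finset.mem_union.1 ((hint W hW).2 htW) with h | h
    · exact absurd h htX
    · exact Finset.mem_sdiff.2 ⟨h, htX⟩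
  have hcore : ∀ W ∈ G, ∀ t, t ∈ X → t ∈ X' → t ∈ W := by
    intro W hW t h1 h2
    exact (hint W hW).1 (Finset.mem_inter.2 ⟨h1, h2⟩)
  -- the set of "lower" witnesses
  set LB : Finset E := (X' \ X).filter (fun z => insert z (X.erase x) ∈ G) with hLBdef
  -- The descending chain argument
  have chain : ∀ (k : ℕ) (w : E), w ∈ X' \ X → insert x (X'.erase w) ∈ G →
      ∀ W ∈ G, x ∉ W → w ∈ W → W ≠ X' →
      (W \ X).card + ((X' \ W) \ LB).card = k → False := by
    intro k
    induction k using Nat.strong_induction_on with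
    | _ k ihk =>
      intro w hwB hwU W hW hxW hwW hWne hk
      obtain ⟨hwX', hwX⟩ := Finset.mem_sdiff.1 hwB
      have hwx : w ≠ x := fun h => hxX' (h ▸ hwX')
      rcases lemma1 W hW hxW hWne with ⟨h1, _⟩ | ⟨z, hzWX, hzL, hV⟩
      · exact hnE h1
      · obtain ⟨hzW, hzX⟩ := Finset.mem_sdiff.1 hzWX
        have hzB : z ∈ X' \ X := hmemB W hW z hzW hzX
        have hzX' : z ∈ X' := (Finset.mem_sdiff.1 hzB).1
        have hznU : insert x (X'.erase z) ∉ G := hnW z hzB hzL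
        have hzw : z ≠ w := fun h => hznU (h ▸ hwU)
        have hzx : z ≠ x := fun h => hzX (h ▸ hxX)
        have hzLB : z ∈ LB := Finset.mem_filter.2 ⟨hzB, hzL⟩
        have hznWez : z ∉ W.erase z := fun hh => (Finset.mem_erase.1 hh).1 rfl
        set V : Finset E := insert x (W.erase z) with hVdef
        have hwV : w ∈ V :=
          Finset.mem_insert_of_mem (Finset.mem_erase.2 ⟨fun h => hzw h.symm, hwW⟩)
        have hVX : V ≠ X := fun h => hwX (h ▸ hwV)
        have hxV : x ∈ V := Finset.mem_insert_self _ _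
        have herase : V.erase x = W.erase z := by
          rw [hVdef, Finset.erase_insert]
          intro hmem
          exact hxW (Finset.mem_of_mem_erase hmem)
        have hWXz : (W.erase z) \ X = (W \ X).erase z := by
          rw [Finset.erase_sdiff_comm]
        have hX'Wz : X' \ (W.erase z) = insert z (X' \ W) := by
          ext t
          simp only [Finset.mem_sdiff, Finset.mem_erase, Finset.mem_insert, not_and]
          by_cases htz : t = z
          · subst htz
            exact ⟨fun _ => Or.inl rfl, fun _ => ⟨hzX', fun h => absurd rfl h⟩⟩
          · constructor
            · rintro ⟨h1, h2⟩
              exact Or.inr ⟨h1, fun hh => (h2 htz hh).elim⟩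
            · rintro (h | ⟨h1, h2⟩)
              · exact absurd h htz
              · exact ⟨h1, fun _ hh => h2 hh⟩
        rcases lemma2 V hV hxV hVX with ⟨h1, _⟩ | ⟨u, huX'V, hVu, huU⟩
        · -- u = ∅ : recurse on W.erase z
          rw [herase] at h1
          have hxWez : x ∉ W.erase z := fun h => hxW (Finset.mem_of_mem_erase h)
          have hwWez : w ∈ W.erase z := Finset.mem_erase.2 ⟨fun h => hzw h.symm, hwW⟩
          have hWezne : W.erase z ≠ X' := by
            intro h
            rw [← h] at hzX'
            exact hznWez hzX'
          have hlt : ((W.erase z) \ X).card + ((X' \ (W.erase z)) \ LB).card < k := by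
            rw [hWXz, hX'Wz, Finset.insert_sdiff_of_mem _ hzLB,
              Finset.card_erase_of_mem hzWX]
            have hpos : 0 < (W \ X).card := Finset.card_pos.2 ⟨z, hzWX⟩
            omega
          exact ihk _ hlt w hwB hwU (W.erase z) h1 hxWez hwWez hWezne rfl
        · -- u real : recurse on insert u (W.erase z)
          obtain ⟨huX', huV⟩ := Finset.mem_sdiff.1 huX'V
          have huX : u ∉ X := by
            intro huX
            exact huV (Finset.mem_insert_of_mem (Finset.mem_erase.2
              ⟨fun h => hzX (h ▸ huX), hcore W hW u huX huX'⟩))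
          have huB : u ∈ X' \ X := Finset.mem_sdiff.2 ⟨huX', huX⟩
          have hunL : insert u (X.erase x) ∉ G := fun h => (hnW u huB h) huU
          have huz : u ≠ z := fun h => hznU (h ▸ huU)
          have hux : u ≠ x := fun h => hxX' (h ▸ huX')
          have huW : u ∉ W := fun h =>
            huV (Finset.mem_insert_of_mem (Finset.mem_erase.2 ⟨huz, h⟩))
          have hunLB : u ∉ LB := fun h => hunL (Finset.mem_filter.1 h).2
          rw [herase] at hVu
          set W' : Finset E := insert u (W.erase z) with hW'def
          have hzW' : z ∉ W' := by
            rw [hW'def]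
            simp only [Finset.mem_insert, Finset.mem_erase]
            rintro (h | ⟨h, _⟩)
            · exact huz h.symm
            · exact h rfl
          have hxW' : x ∉ W' := by
            rw [hW'def]
            simp only [Finset.mem_insert, Finset.mem_erase]
            rintro (h | ⟨_, h⟩)
            · exact hux h.symm
            · exact hxW h
          have hwW' : w ∈ W' := by
            rw [hW'def]
            exact Finset.mem_insert_of_mem (Finset.mem_erase.2 ⟨fun h => hzw h.symm, hwW⟩)
          have hW'ne : W' ≠ X' := by
            intro h
            rw [← h] at hzX'
            exact hzW' hzX'
          have huWX : u ∈ (X' \ W) \ LB :=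
            Finset.mem_sdiff.2 ⟨Finset.mem_sdiff.2 ⟨huX', huW⟩, hunLB⟩
          have hWX' : W' \ X = insert u ((W \ X).erase z) := by
            rw [hW'def]
            ext t
            simp only [Finset.mem_sdiff, Finset.mem_insert, Finset.mem_erase]
            by_cases htu : t = u
            · subst htu
              exact ⟨fun _ => Or.inl rfl, fun _ => ⟨Or.inl rfl, huX⟩⟩
            · by_cases htz : t = z
              · subst htz
                constructor
                · rintro ⟨h | ⟨h, _⟩, _⟩
                  · exact absurd h.symm huz
                  · exact absurd rfl h
                · rintro (h | ⟨h, -⟩)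
                  · exact absurd h htu
                  · exact absurd rfl h
              · constructor
                · rintro ⟨h | ⟨_, h⟩, hX⟩
                  · exact absurd h htu
                  · exact Or.inr ⟨htz, h, hX⟩
                · rintro (h | ⟨_, h, hX⟩)
                  · exact absurd h htu
                  · exact ⟨Or.inr ⟨htz, h⟩, hX⟩
          have hX'W' : X' \ W' = insert z ((X' \ W).erase u) := by
            rw [hW'def]
            ext t
            simp only [Finset.mem_sdiff, Finset.mem_insert, Finset.mem_erase, not_or, not_and]
            by_cases htz : t = z
            · subst htz
              refine ⟨fun _ => Or.inl rfl, fun _ => ⟨hzX', huz.symm, fun h => absurd rfl h⟩⟩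
            · by_cases htu : t = u
              · subst htu
                constructor
                · rintro ⟨_, h, _⟩
                  exact absurd rfl h
                · rintro (h | ⟨h, _⟩)
                  · exact absurd h htz
                  · exact absurd rfl h
              · constructor
                · rintro ⟨h1, _, h2⟩
                  exact Or.inr ⟨htu, h1, fun hh => (h2 htz hh).elim⟩
                · rintro (h | ⟨_, h1, h2⟩)
                  · exact absurd h htz
                  · exact ⟨h1, htu, fun _ hh => h2 hh⟩
          have hlt : (W' \ X).card + ((X' \ W') \ LB).card < k := by
            rw [hWX', hX'W', Finset.insert_sdiff_of_mem _ hzLB,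
              Finset.card_insert_of_notMem (by
                simp only [Finset.mem_erase]
                rintro ⟨_, h⟩
                exact huW (Finset.mem_sdiff.1 h).1),
              Finset.card_erase_of_mem hzWX,
              show ((X' \ W).erase u) \ LB = ((X' \ W) \ LB).erase u from
                (Finset.erase_sdiff_comm (X' \ W) LB u),
              Finset.card_erase_of_mem huWX]
            have hpos1 : 0 < (W \ X).card := Finset.card_pos.2 ⟨z, hzWX⟩
            have hpos2 : 0 < ((X' \ W) \ LB).card := Finset.card_pos.2 ⟨u, huWX⟩
            omega
          exact ihk _ hlt w hwB hwU W' hVu hxW' hwW' hW'ne rfl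
  -- Small cases (total symmetric difference at most 3)
  by_cases hsmall : (X \ X').card + (X' \ X).card ≤ 3
  · -- Small cases : |X Δ X'| ≤ 3
    have final : ∀ w ∈ X' \ X, insert w (X.erase x) ∈ G → insert x (X'.erase w) ∈ G → False :=
      fun w hw h1 h2 => (hnW w hw h1) h2
    have hApos : 1 ≤ (X \ X').card := Finset.card_pos.2 ⟨x, hx⟩
    have hAcase : (X \ X').card = 1 ∨ (X \ X').card = 2 ∨ (X \ X').card = 3 := by omega
    rcases hAcase with hA1 | hA2 | hA3
    · -- |A| = 1 : X \ X' = {x}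
      have hAmem : ∀ t, t ∈ X → t ∉ X' → t = x := by
        obtain ⟨a0, ha0⟩ := Finset.card_eq_one.1 hA1
        have hxa0 : x = a0 := Finset.mem_singleton.1 (ha0 ▸ hx)
        intro t h1 h2
        have : t ∈ X \ X' := Finset.mem_sdiff.2 ⟨h1, h2⟩
        rw [ha0, Finset.mem_singleton] at this
        exact this.trans hxa0.symm
      have hBcase : (X' \ X).card = 0 ∨ (X' \ X).card = 1 ∨ (X' \ X).card = 2 := by omega
      rcases hBcase with hB0 | hB1 | hB2
      · -- B = ∅
        have hBe : ∀ t, t ∈ X' → t ∈ X := by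
          intro t ht
          by_contra htX
          rw [Finset.card_eq_zero] at hB0
          exact Finset.notMem_empty t (hB0 ▸ Finset.mem_sdiff.2 ⟨ht, htX⟩)
        have heq : X.erase x = X' := by
          ext t
          simp only [Finset.mem_erase]
          constructor
          · rintro ⟨htx, htX⟩
            by_contra htX'
            exact htx (hAmem t htX htX')
          · intro ht
            exact ⟨fun h => hxX' (h ▸ ht), hBe t ht⟩
        exact hnE (by rw [heq]; exact hX')
      · -- B = {b}
        obtain ⟨b, hb⟩ := Finset.card_eq_one.1 hB1
        have hbB : b ∈ X' \ X := by rw [hb]; exact Finset.mem_singleton_self b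
        obtain ⟨hbX', hbX⟩ := Finset.mem_sdiff.1 hbB
        have hBmem : ∀ t, t ∈ X' → t ∉ X → t = b := by
          intro t h1 h2
          have : t ∈ X' \ X := Finset.mem_sdiff.2 ⟨h1, h2⟩
          rw [hb, Finset.mem_singleton] at this
          exact this
        have e1 : insert b (X.erase x) = X' := by
          ext t
          simp only [Finset.mem_insert, Finset.mem_erase]
          constructor
          · rintro (h | ⟨htx, htX⟩)
            · exact h ▸ hbX'
            · by_contra htX'
              exact htx (hAmem t htX htX')
          · intro ht
            by_cases htX : t ∈ X
            · exact Or.inr ⟨fun h => hxX' (h ▸ ht), htX⟩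
            · exact Or.inl (hBmem t ht htX)
        have e2 : insert x (X'.erase b) = X := by
          ext t
          simp only [Finset.mem_insert, Finset.mem_erase]
          constructor
          · rintro (h | ⟨htb, htX'⟩)
            · exact h ▸ hxX
            · by_contra htX
              exact htb (hBmem t htX' htX)
          · intro ht
            by_cases htX' : t ∈ X'
            · exact Or.inr ⟨fun h => hbX (h ▸ ht), htX'⟩
            · exact Or.inl (hAmem t ht htX')
        exact final b hbB (by rw [e1]; exact hX') (by rw [e2]; exact hX)
      · -- B = {b₁, b₂} : use the simultaneous exchange at (X, X')
        obtain ⟨y, y', hyy', hyA, hy'B, h1, h2⟩ := hD X hX X' hX' hXne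
        by_cases hyx : y = some x
        · subst hyx
          rcases y' with _ | b
          · exact hnE (by simpa using h1)
          · exact final b (mem?_some.1 hy'B) (by simpa using h1) (by simpa using h2)
        · have hynone : y = none := by
            rcases y with _ | a0
            · rfl
            · exfalso
              obtain ⟨ha0X, ha0X'⟩ := Finset.mem_sdiff.1 (hyA a0 rfl)
              exact hyx (congrArg some (hAmem a0 ha0X ha0X'))
          subst hynone
          rcases y' with _ | b
          · exact absurd rfl hyy'
          · have hbB : b ∈ X' \ X := mem?_some.1 hy'B
            obtain ⟨hbX', hbX⟩ := Finset.mem_sdiff.1 hbB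
            have h1' : insert b X ∈ G := by simpa using h1
            have h2' : X'.erase b ∈ G := by simpa using h2
            have hcc : ∃ cc, cc ∈ X' \ X ∧ cc ≠ b ∧
                (∀ t, t ∈ X' → t ∉ X → t = b ∨ t = cc) := by
              obtain ⟨u, v, huv, heq⟩ := Finset.card_eq_two.1 hB2
              have hbuv : b = u ∨ b = v := by
                have := hbB
                rw [heq] at this
                simpa using this
              have hmem : ∀ t, t ∈ X' → t ∉ X → t = u ∨ t = v := by
                intro t ht1 ht2
                have : t ∈ X' \ X := Finset.mem_sdiff.2 ⟨ht1, ht2⟩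
                rw [heq] at this
                simpa using this
              have huB : u ∈ X' \ X := by rw [heq]; simp
              have hvB : v ∈ X' \ X := by rw [heq]; simp
              rcases hbuv with rfl | rfl
              · exact ⟨v, hvB, fun h => huv h.symm, fun t h1'' h2'' => hmem t h1'' h2''⟩
              · exact ⟨u, huB, fun h => huv h, fun t h1'' h2'' => (hmem t h1'' h2'').symm⟩
            obtain ⟨cc, hccB, hccb, hBmem⟩ := hcc
            obtain ⟨hccX', hccX⟩ := Finset.mem_sdiff.1 hccB
            have e1 : insert cc (X.erase x) = X'.erase b := by
              ext t
              simp only [Finset.mem_insert, Finset.mem_erase]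
              constructor
              · rintro (h | ⟨htx, htX⟩)
                · exact ⟨h ▸ hccb, h ▸ hccX'⟩
                · refine ⟨fun h => hbX (h ▸ htX), ?_⟩
                  by_contra htX'
                  exact htx (hAmem t htX htX')
              · rintro ⟨htb, htX'⟩
                by_cases htX : t ∈ X
                · exact Or.inr ⟨fun h => hxX' (h ▸ htX'), htX⟩
                · rcases hBmem t htX' htX with h | h
                  · exact absurd h htb
                  · exact Or.inl h
            have e2 : insert x (X'.erase cc) = insert b X := by
              ext t
              simp only [Finset.mem_insert, Finset.mem_erase]
              constructor
              · rintro (h | ⟨htcc, htX'⟩)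
                · exact Or.inr (h ▸ hxX)
                · by_cases htX : t ∈ X
                  · exact Or.inr htX
                  · rcases hBmem t htX' htX with h | h
                    · exact Or.inl h
                    · exact absurd h htcc
              · rintro (h | h)
                · exact Or.inr ⟨fun he => hccb (he.symm.trans h), by rw [h]; exact hbX'⟩
                · by_cases htX' : t ∈ X'
                  · exact Or.inr ⟨fun he => hccX (he ▸ h), htX'⟩
                  · exact Or.inl (hAmem t h htX')
            exact final cc hccB (by rw [e1]; exact h2') (by rw [e2]; exact h1')
    · -- |A| = 2
      have hstruct : ∃ a, a ≠ x ∧ a ∈ X \ X' ∧ (∀ t, t ∈ X → t ∉ X' → t = x ∨ t = a) := by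
        obtain ⟨u, v, huv, heq⟩ := Finset.card_eq_two.1 hA2
        have hmem : ∀ t, t ∈ X → t ∉ X' → t = u ∨ t = v := by
          intro t h1 h2
          have : t ∈ X \ X' := Finset.mem_sdiff.2 ⟨h1, h2⟩
          rw [heq] at this
          simpa using this
        have hxuv : x = u ∨ x = v := by
          have := hx
          rw [heq] at this
          simpa using this
        have huA : u ∈ X \ X' := by rw [heq]; simp
        have hvA : v ∈ X \ X' := by rw [heq]; simp
        rcases hxuv with rfl | rfl
        · exact ⟨v, fun h => huv h.symm, hvA, hmem⟩
        · exact ⟨u, fun h => huv h, huA, fun t h1 h2 => (hmem t h1 h2).symm⟩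
      obtain ⟨a, hax, haA, hAmem⟩ := hstruct
      obtain ⟨haX, haX'⟩ := Finset.mem_sdiff.1 haA
      have hBcase : (X' \ X).card = 0 ∨ (X' \ X).card = 1 := by omega
      obtain ⟨y, y', hyy', hyA, hy'B, h1, h2⟩ := hD X hX X' hX' hXne
      rcases hBcase with hB0 | hB1
      · -- B = ∅
        have hBe : ∀ t, t ∈ X' → t ∈ X := by
          intro t ht
          by_contra htX
          rw [Finset.card_eq_zero] at hB0
          exact Finset.notMem_empty t (hB0 ▸ Finset.mem_sdiff.2 ⟨ht, htX⟩)
        have hy'n : y' = none := by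
          rcases y' with _ | b
          · rfl
          · exfalso
            obtain ⟨h1b, h2b⟩ := Finset.mem_sdiff.1 (hy'B b rfl)
            exact h2b (hBe b h1b)
        subst hy'n
        rcases y with _ | t0
        · exact absurd rfl hyy'
        · have ht0A := hyA t0 rfl
          obtain ⟨ht0X, ht0X'⟩ := Finset.mem_sdiff.1 ht0A
          by_cases ht0x : t0 = x
          · subst ht0x
            exact hnE (by simpa using h1)
          · have ht0a : t0 = a := (hAmem t0 ht0X ht0X').resolve_left ht0x
            subst ht0a
            have h2' : insert t0 X' ∈ G := by simpa using h2
            have e : insert t0 X' = X.erase x := by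
              ext t
              simp only [Finset.mem_insert, Finset.mem_erase]
              constructor
              · rintro (h | h)
                · exact ⟨fun he => ht0x (h.symm.trans he), by rw [h]; exact ht0X⟩
                · exact ⟨fun he => hxX' (he ▸ h), hBe t h⟩
              · rintro ⟨htx, htX⟩
                by_cases htX' : t ∈ X'
                · exact Or.inr htX'
                · rcases hAmem t htX htX' with h | h
                  · exact absurd h htx
                  · exact Or.inl h
            exact hnE (by rw [← e]; exact h2')
      · -- B = {b}
        obtain ⟨b, hb⟩ := Finset.card_eq_one.1 hB1
        have hbB : b ∈ X' \ X := by rw [hb]; exact Finset.mem_singleton_self b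
        obtain ⟨hbX', hbX⟩ := Finset.mem_sdiff.1 hbB
        have hBmem : ∀ t, t ∈ X' → t ∉ X → t = b := by
          intro t h1 h2
          have : t ∈ X' \ X := Finset.mem_sdiff.2 ⟨h1, h2⟩
          rw [hb, Finset.mem_singleton] at this
          exact this
        rcases y with _ | t0
        · -- y = ∅, y' = some b : use the induction hypothesis once
          have hy'b : y' = some b := by
            rcases y' with _ | b0
            · exact absurd rfl hyy'
            · have := hy'B b0 rfl
              rw [hb, Finset.mem_singleton] at this
              rw [this]
          subst hy'b
          have h2' : X'.erase b ∈ G := by simpa using h2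
          have e1 : (X'.erase b) \ X = ∅ := by
            refine Finset.eq_empty_iff_forall_notMem.2 fun t ht => ?_
            obtain ⟨hte, htX⟩ := Finset.mem_sdiff.1 ht
            exact (Finset.mem_erase.1 hte).1 (hBmem t (Finset.mem_of_mem_erase hte) htX)
          have e2 : X \ (X'.erase b) = X \ X' := by
            ext t
            simp only [Finset.mem_sdiff, Finset.mem_erase]
            constructor
            · rintro ⟨htX, h⟩
              refine ⟨htX, fun htX' => h ⟨fun he => hbX (he ▸ htX), htX'⟩⟩
            · rintro ⟨htX, htX'⟩
              exact ⟨htX, fun hh => htX' hh.2⟩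
          have hd : (X \ (X'.erase b)).card + ((X'.erase b) \ X).card <
              (X \ X').card + (X' \ X).card := by
            rw [e1, e2, Finset.card_empty]
            omega
          have hxmem : x ∈ X \ (X'.erase b) := by
            rw [e2]
            exact hx
          rcases hIH X hX _ h2' hd x hxmem with ⟨hXe, _⟩ | ⟨v, hv, _, _⟩
          · exact hnE hXe
          · rw [e1] at hv
            exact Finset.notMem_empty v hv
        · have ht0A := hyA t0 rfl
          obtain ⟨ht0X, ht0X'⟩ := Finset.mem_sdiff.1 ht0A
          by_cases ht0x : t0 = x
          · subst ht0x
            rcases y' with _ | b0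
            · exact hnE (by simpa using h1)
            · exact final b0 (mem?_some.1 hy'B) (by simpa using h1) (by simpa using h2)
          · have ht0a : t0 = a := (hAmem t0 ht0X ht0X').resolve_left ht0x
            subst ht0a
            rcases y' with _ | b0
            · -- (a, ∅)
              have h1' : X.erase t0 ∈ G := by simpa using h1
              have h2' : insert t0 X' ∈ G := by simpa using h2
              have e1 : insert b (X.erase x) = insert t0 X' := by
                ext t
                simp only [Finset.mem_insert, Finset.mem_erase]
                constructor
                · rintro (h | ⟨htx, htX⟩)
                  · exact Or.inr (h ▸ hbX')
                  · by_cases htX' : t ∈ X'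
                    · exact Or.inr htX'
                    · rcases hAmem t htX htX' with h | h
                      · exact absurd h htx
                      · exact Or.inl h
                · rintro (h | h)
                  · exact Or.inr ⟨fun he => ht0x (h.symm.trans he), by rw [h]; exact ht0X⟩
                  · by_cases htX : t ∈ X
                    · exact Or.inr ⟨fun he => hxX' (he ▸ h), htX⟩
                    · exact Or.inl (hBmem t h htX)
              have e2 : insert x (X'.erase b) = X.erase t0 := by
                ext t
                simp only [Finset.mem_insert, Finset.mem_erase]
                constructor
                · rintro (h | ⟨htb, htX'⟩)
                  · exact ⟨fun he => ht0x (he.symm.trans h), by rw [h]; exact hxX⟩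
                  · have htX : t ∈ X := by
                      by_contra htX
                      exact htb (hBmem t htX' htX)
                    exact ⟨fun he => ht0X' (he ▸ htX'), htX⟩
                · rintro ⟨htt0, htX⟩
                  by_cases htX' : t ∈ X'
                  · exact Or.inr ⟨fun he => hbX (he ▸ htX), htX'⟩
                  · rcases hAmem t htX htX' with h | h
                    · exact Or.inl h
                    · exact absurd h htt0
              exact final b hbB (by rw [e1]; exact h2') (by rw [e2]; exact h1')
            · -- (a, b)
              have hb0 : b0 = b := by
                have := hy'B b0 rfl
                rw [hb, Finset.mem_singleton] at this
                exact this
              subst hb0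
              have h2' : insert t0 (X'.erase b0) ∈ G := by simpa using h2
              have e : insert t0 (X'.erase b0) = X.erase x := by
                ext t
                simp only [Finset.mem_insert, Finset.mem_erase]
                constructor
                · rintro (h | ⟨htb, htX'⟩)
                  · exact ⟨fun he => ht0x (h.symm.trans he), by rw [h]; exact ht0X⟩
                  · have htX : t ∈ X := by
                      by_contra htX
                      exact htb (hBmem t htX' htX)
                    exact ⟨fun he => hxX' (he ▸ htX'), htX⟩
                · rintro ⟨htx, htX⟩
                  by_cases htX' : t ∈ X'
                  · exact Or.inr ⟨fun he => hbX (he ▸ htX), htX'⟩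
                  · rcases hAmem t htX htX' with h | h
                    · exact absurd h htx
                    · exact Or.inl h
              exact hnE (by rw [← e]; exact h2')
    · -- |A| = 3, B = ∅
      have hB0 : (X' \ X).card = 0 := by omega
      have hBe : ∀ t, t ∈ X' → t ∈ X := by
        intro t ht
        by_contra htX
        rw [Finset.card_eq_zero] at hB0
        exact Finset.notMem_empty t (hB0 ▸ Finset.mem_sdiff.2 ⟨ht, htX⟩)
      obtain ⟨y, y', hyy', hyA, hy'B, h1, h2⟩ := hD X hX X' hX' hXne
      have hy'n : y' = none := by
        rcases y' with _ | b
        · rfl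
        · exfalso
          obtain ⟨h1b, h2b⟩ := Finset.mem_sdiff.1 (hy'B b rfl)
          exact h2b (hBe b h1b)
      subst hy'n
      rcases y with _ | t0
      · exact absurd rfl hyy'
      · have ht0A := hyA t0 rfl
        obtain ⟨ht0X, ht0X'⟩ := Finset.mem_sdiff.1 ht0A
        by_cases ht0x : t0 = x
        · subst ht0x
          exact hnE (by simpa using h1)
        · have h1' : X.erase t0 ∈ G := by simpa using h1
          have e1 : X' \ (X.erase t0) = ∅ := by
            refine Finset.eq_empty_iff_forall_notMem.2 fun t ht => ?_
            obtain ⟨htX', h⟩ := Finset.mem_sdiff.1 ht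
            exact h (Finset.mem_erase.2 ⟨fun he => ht0X' (he ▸ htX'), hBe t htX'⟩)
          have e2 : (X.erase t0) \ X' = (X \ X').erase t0 := by
            rw [Finset.erase_sdiff_comm]
          have hd1 : ((X.erase t0) \ X').card + (X' \ (X.erase t0)).card <
              (X \ X').card + (X' \ X).card := by
            rw [e1, e2, Finset.card_empty, Finset.card_erase_of_mem ht0A]
            omega
          have hxm : x ∈ (X.erase t0) \ X' :=
            Finset.mem_sdiff.2 ⟨Finset.mem_erase.2 ⟨fun h => ht0x h.symm, hxX⟩, hxX'⟩
          rcases hIH _ h1' X' hX' hd1 x hxm with ⟨hXe2, _⟩ | ⟨v, hv, _, _⟩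
          · -- T2 := (X.erase t0).erase x ∈ G
            have e3 : ((X.erase t0).erase x) \ X = ∅ := by
              refine Finset.eq_empty_iff_forall_notMem.2 fun t ht => ?_
              obtain ⟨hte, htX⟩ := Finset.mem_sdiff.1 ht
              exact htX (Finset.mem_of_mem_erase (Finset.mem_of_mem_erase hte))
            have e4 : X \ ((X.erase t0).erase x) = {t0, x} := by
              ext t
              simp only [Finset.mem_sdiff, Finset.mem_erase, Finset.mem_insert,
                Finset.mem_singleton, not_and]
              constructor
              · rintro ⟨htX, h⟩
                by_cases htx : t = x
                · exact Or.inr htx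
                · left
                  by_contra htt0
                  exact h htx htt0 htX
              · rintro (h | h)
                · exact ⟨by rw [h]; exact ht0X, fun _ htt0 _ => htt0 h⟩
                · exact ⟨by rw [h]; exact hxX, fun hne _ _ => hne h⟩
            have hd2 : (X \ ((X.erase t0).erase x)).card +
                (((X.erase t0).erase x) \ X).card < (X \ X').card + (X' \ X).card := by
              rw [e3, e4, Finset.card_empty]
              have hc4 : ({t0, x} : Finset E).card ≤ 2 :=
                (Finset.card_insert_le _ _).trans (by simp)
              omega
            have hxm2 : x ∈ X \ ((X.erase t0).erase x) := by
              rw [e4]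
              simp
            rcases hIH X hX _ hXe2 hd2 x hxm2 with ⟨hXe3, _⟩ | ⟨v, hv, _, _⟩
            · exact hnE hXe3
            · rw [e3] at hv
              exact Finset.notMem_empty v hv
          · rw [e1] at hv
            exact Finset.notMem_empty v hv
  · -- Main walk, n ≥ 4
    obtain ⟨y, y', hyy', hyA, hy'B, hX1, hW0⟩ := hD X hX X' hX' hXne
    by_cases hyx : y = some x
    · subst hyx
      rcases y' with _ | b
      · exact hnE (by simpa using hX1)
      · have hb : b ∈ X' \ X := mem?_some.1 hy'B
        exact (hnW b hb (by simpa using hX1)) (by simpa using hW0)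
    · set W0 : Finset E := move X' y' y with hW0def
      have hW0G : W0 ∈ G := hW0
      have hxW0 : x ∉ W0 := by
        rw [hW0def]
        intro h
        rcases mem_move.1 h with h | ⟨h1, _⟩
        · exact hyx h
        · exact hxX' h1
      have hW0ne : W0 ≠ X' := by
        intro h
        rcases hy : y with _ | a
        · rcases hy' : y' with _ | b
          · exact hyy' (hy.trans hy'.symm)
          · have hbX' : b ∈ X' := (Finset.mem_sdiff.1 (mem?_some.1 (hy' ▸ hy'B))).1
            have hbW0 : b ∉ W0 := by
              rw [hW0def, hy, hy']
              intro hb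
              rcases mem_move.1 hb with h' | ⟨_, h2⟩
              · cases h'
              · exact h2 rfl
            exact hbW0 (h ▸ hbX')
        · have ha : a ∈ X \ X' := mem?_some.1 (hy ▸ hyA)
          have haW0 : a ∈ W0 := by
            rw [hW0def, hy]
            exact mem_move.2 (Or.inl rfl)
          exact (Finset.mem_sdiff.1 ha).2 (h ▸ haW0)
      rcases lemma1 W0 hW0G hxW0 hW0ne with ⟨h1, _⟩ | ⟨c, hcW0X, hcL, hV0⟩
      · exact hnE h1
      obtain ⟨hcW0, hcX⟩ := Finset.mem_sdiff.1 hcW0X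
      have hcB : c ∈ X' \ X := hmemB W0 hW0G c hcW0 hcX
      have hcX' : c ∈ X' := (Finset.mem_sdiff.1 hcB).1
      have hcnU : insert x (X'.erase c) ∉ G := hnW c hcB hcL
      have hcx : c ≠ x := fun h => hcX (h ▸ hxX)
      by_cases hUB : ∃ w ∈ X' \ X, insert x (X'.erase w) ∈ G
      · -- CASE A
        obtain ⟨w, hwB, hwU⟩ := hUB
        obtain ⟨hwX', hwX⟩ := Finset.mem_sdiff.1 hwB
        have hwnL : insert w (X.erase x) ∉ G := fun h => hnW w hwB h hwU
        have hwx : w ≠ x := fun h => hxX' (h ▸ hwX')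
        have hcw : c ≠ w := fun h => hcnU (h ▸ hwU)
        by_cases hwy' : y' = some w
        · -- A2 : the only member of U∩B compatible with W0 is w = y'
          by_cases hA2 : ((X \ X').erase x).Nonempty
          · -- A2a : |X \ X'| ≥ 2
            obtain ⟨a, haAx⟩ := hA2
            have hax : a ≠ x := (Finset.mem_erase.1 haAx).1
            have haA : a ∈ X \ X' := (Finset.mem_erase.1 haAx).2
            obtain ⟨haX, haX'⟩ := Finset.mem_sdiff.1 haA
            set P : Finset E := insert c (X.erase x) with hPdef
            have hPG : P ∈ G := hcL
            have hxP : x ∉ P := by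
              rw [hPdef]
              intro h
              rcases Finset.mem_insert.1 h with h | h
              · exact hcx h.symm
              · exact (Finset.mem_erase.1 h).1 rfl
            have haP : a ∈ P \ X' := Finset.mem_sdiff.2
              ⟨Finset.mem_insert_of_mem (Finset.mem_erase.2 ⟨hax, haX⟩), haX'⟩
            have hPX : P ≠ X := fun h => hcX (h ▸ Finset.mem_insert_self _ _)
            have hltP : (P \ X').card + (X' \ P).card <
                (X \ X').card + (X' \ X).card :=
              interval_card_lt' (hint P hPG).1 (hint P hPG).2 hPX
            rcases hIH P hPG X' hX' hltP a haP with ⟨hPa, hiaX'⟩ | ⟨w2, hw2, hPw2, hX'w2⟩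
            · refine chain _ w hwB hwU (insert a X') hiaX' ?_
                (Finset.mem_insert_of_mem hwX') ?_ rfl
              · intro h
                rcases Finset.mem_insert.1 h with h | h
                · exact hax h.symm
                · exact hxX' h
              · intro h
                exact haX' (h ▸ Finset.mem_insert_self _ _)
            · obtain ⟨hw2X', hw2P⟩ := Finset.mem_sdiff.1 hw2
              have hw2x : w2 ≠ x := fun h => hxX' (h ▸ hw2X')
              have hw2X : w2 ∉ X := fun h =>
                hw2P (Finset.mem_insert_of_mem (Finset.mem_erase.2 ⟨hw2x, h⟩))
              by_cases hw2w : w2 = w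
              · subst hw2w
                by_cases hro : insert w2 (P.erase a) = X'
                · -- CONFIG-I : X \ X' = {x,a}, X' \ X = {c,w2}
                  have hAsub : ∀ t, t ∈ X → t ∉ X' → t = x ∨ t = a := by
                    intro t htX htX'
                    by_contra hcon2
                    push_neg at hcon2
                    have hmem : t ∈ insert w2 (P.erase a) :=
                      Finset.mem_insert_of_mem (Finset.mem_erase.2 ⟨hcon2.2,
                        Finset.mem_insert_of_mem (Finset.mem_erase.2 ⟨hcon2.1, htX⟩)⟩)
                    rw [hro] at hmem
                    exact htX' hmem
                  have hBsub : ∀ t, t ∈ X' → t ∉ X → t = c ∨ t = w2 := by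
                    intro t htX' htX
                    rw [← hro] at htX'
                    rcases Finset.mem_insert.1 htX' with h | h
                    · exact Or.inr h
                    · rcases Finset.mem_insert.1 (Finset.mem_of_mem_erase h) with h' | h'
                      · exact Or.inl h'
                      · exact absurd (Finset.mem_of_mem_erase h') htX
                  have hyc : y = none ∨ ∃ a0, y = some a0 := by
                    rcases y with _ | a0
                    · exact Or.inl rfl
                    · exact Or.inr ⟨a0, rfl⟩
                  rcases hyc with hyc | ⟨a0, hyc⟩
                  · -- y = ∅, W0 = X'.erase w2, V0 = X.erase a; walk the V0 route
                    have hW0eq : W0 = X'.erase w2 := by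
                      rw [hW0def, hyc, hwy']
                      rfl
                    have hV0eq : insert x (W0.erase c) = X.erase a := by
                      rw [hW0eq]
                      ext t
                      simp only [Finset.mem_insert, Finset.mem_erase]
                      constructor
                      · rintro (h | ⟨htc, htw2, htX'⟩)
                        · exact ⟨fun he => hax (he.symm.trans h), by rw [h]; exact hxX⟩
                        · have htX : t ∈ X := by
                            by_contra htX
                            rcases hBsub t htX' htX with h' | h'
                            · exact htc h'
                            · exact htw2 h'
                          exact ⟨fun he => haX' (he ▸ htX'), htX⟩
                      · rintro ⟨hta, htX⟩
                        by_cases htX' : t ∈ X'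
                        · refine Or.inr ⟨fun he => hcX (he ▸ htX), fun he => hw2X (he ▸ htX),
                            htX'⟩
                        · rcases hAsub t htX htX' with h | h
                          · exact Or.inl h
                          · exact absurd h hta
                    rw [hV0eq] at hV0
                    -- Lemma 2 at X.erase a
                    have hxV0 : x ∈ X.erase a := Finset.mem_erase.2 ⟨fun h => hax h.symm, hxX⟩
                    have hV0ne : X.erase a ≠ X := fun h => (Finset.erase_eq_self.1 h) haX
                    rcases lemma2 _ hV0 hxV0 hV0ne with ⟨hV0e, _⟩ | ⟨u4, hu4, hV0u4, hu4U⟩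
                    · -- W3 := (X.erase a).erase x ∈ G
                      have hxW3 : x ∉ (X.erase a).erase x := fun h => (Finset.mem_erase.1 h).1 rfl
                      have hW3ne : (X.erase a).erase x ≠ X' := by
                        intro h
                        apply hcX
                        have hc2 : c ∈ (X.erase a).erase x := by rw [h]; exact hcX'
                        exact Finset.mem_of_mem_erase (Finset.mem_of_mem_erase hc2)
                      rcases lemma1 _ hV0e hxW3 hW3ne with ⟨h1, _⟩ | ⟨z3, hz3, _, _⟩
                      · exact hnE h1
                      · obtain ⟨hz3W, hz3X⟩ := Finset.mem_sdiff.1 hz3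
                        exact hz3X (Finset.mem_of_mem_erase (Finset.mem_of_mem_erase hz3W))
                    · -- u4 ∈ X' \ (X.erase a) = {c, w2}
                      obtain ⟨hu4X', hu4V0⟩ := Finset.mem_sdiff.1 hu4
                      have hu4X : u4 ∉ X := by
                        intro h
                        have hne4 : u4 ≠ a := fun he => haX' (he ▸ hu4X')
                        exact hu4V0 (Finset.mem_erase.2 ⟨hne4, h⟩)
                      rcases hBsub u4 hu4X' hu4X with h4 | h4
                      · exact hcnU (h4 ▸ hu4U)
                      · -- u4 = w2 : W2 := insert w2 ((X.erase a).erase x) ∈ G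
                        subst h4
                        have hxW2 : x ∉ insert u4 ((X.erase a).erase x) := by
                          intro h
                          rcases Finset.mem_insert.1 h with h | h
                          · exact hwx h.symm
                          · exact (Finset.mem_erase.1 h).1 rfl
                        have hW2ne : insert u4 ((X.erase a).erase x) ≠ X' := by
                          intro h
                          apply hcX
                          have hc2 : c ∈ insert u4 ((X.erase a).erase x) := by
                            rw [h]; exact hcX'
                          rcases Finset.mem_insert.1 hc2 with h' | h'
                          · exact absurd h' hcw
                          · exact Finset.mem_of_mem_erase (Finset.mem_of_mem_erase h')
                        rcases lemma1 _ hV0u4 hxW2 hW2ne with ⟨h1, _⟩ | ⟨z2, hz2, hz2L, _⟩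
                        · exact hnE h1
                        · obtain ⟨hz2W, hz2X⟩ := Finset.mem_sdiff.1 hz2
                          have hz2w2 : z2 = u4 := by
                            rcases Finset.mem_insert.1 hz2W with h | h
                            · exact h
                            · exact absurd (Finset.mem_of_mem_erase (Finset.mem_of_mem_erase h))
                                hz2X
                          subst hz2w2
                          exact hwnL hz2L
                  · -- y = some a0 with a0 = a : direct contradiction via X1
                    have ha0A : a0 ∈ X \ X' := hyA a0 hyc
                    have ha0x : a0 ≠ x := fun h => hyx (hyc.trans (congrArg some h))
                    have ha0a : a0 = a :=
                      (hAsub a0 (Finset.mem_sdiff.1 ha0A).1 (Finset.mem_sdiff.1 ha0A).2).resolve_left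
                        ha0x
                    subst ha0a
                    rw [hyc, hwy'] at hX1
                    have hX1eq : move X (some a0) (some w2) = insert x (X'.erase c) := by
                      rw [move_some_some]
                      ext t
                      simp only [Finset.mem_insert, Finset.mem_erase]
                      constructor
                      · rintro (h | ⟨hta, htX⟩)
                        · exact Or.inr ⟨fun he => hcw (he.symm.trans h), by rw [h]; exact hwX'⟩
                        · by_cases htX' : t ∈ X'
                          · exact Or.inr ⟨fun he => hcX (he ▸ htX), htX'⟩
                          · rcases hAsub t htX htX' with h' | h'
                            · exact Or.inl h'
                            · exact absurd h' hta
                      · rintro (h | ⟨htc, htX'⟩)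
                        · exact Or.inr ⟨fun he => hax ((h.symm.trans he).symm), h ▸ hxX⟩
                        · by_cases htX : t ∈ X
                          · exact Or.inr ⟨fun he => haX' (he ▸ htX'), htX⟩
                          · rcases hBsub t htX' htX with h' | h'
                            · exact absurd h' htc
                            · exact Or.inl h'
                    rw [hX1eq] at hX1
                    exact hcnU hX1
                · refine chain _ w2 hwB hwU (insert w2 (P.erase a)) hPw2 ?_
                    (Finset.mem_insert_self _ _) hro rfl
                  intro h
                  rcases Finset.mem_insert.1 h with h | h
                  · exact hwx h.symm
                  · exact hxP (Finset.mem_of_mem_erase h)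
              · refine chain _ w hwB hwU (insert a (X'.erase w2)) hX'w2 ?_ ?_ ?_ rfl
                · intro h
                  rcases Finset.mem_insert.1 h with h | h
                  · exact hax h.symm
                  · exact hxX' (Finset.mem_of_mem_erase h)
                · exact Finset.mem_insert_of_mem
                    (Finset.mem_erase.2 ⟨fun h => hw2w h.symm, hwX'⟩)
                · intro h
                  exact haX' (h ▸ Finset.mem_insert_self _ _)
          · -- A2b : X \ X' = {x}
            have hAx : X \ X' = {x} := by
              refine Finset.eq_singleton_iff_unique_mem.2 ⟨hx, ?_⟩
              intro t ht
              by_contra htx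
              exact hA2 ⟨t, Finset.mem_erase.2 ⟨htx, ht⟩⟩
            have hBcard : 3 ≤ (X' \ X).card := by
              have h4 : ¬((X \ X').card + (X' \ X).card ≤ 3) := hsmall
              rw [hAx, Finset.card_singleton] at h4
              omega
            have hwBc : w ∈ (X' \ X).erase c :=
              Finset.mem_erase.2 ⟨fun h => hcw h.symm, hwB⟩
            have hbne : (((X' \ X).erase c).erase w).Nonempty := by
              rw [← Finset.card_pos, Finset.card_erase_of_mem hwBc,
                Finset.card_erase_of_mem hcB]
              omega
            obtain ⟨b, hb2⟩ := hbne
            have hbw : b ≠ w := (Finset.mem_erase.1 hb2).1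
            have hbc : b ≠ c :=
              (Finset.mem_erase.1 (Finset.mem_of_mem_erase hb2)).1
            have hbB : b ∈ X' \ X :=
              Finset.mem_of_mem_erase (Finset.mem_of_mem_erase hb2)
            obtain ⟨hbX', hbX⟩ := Finset.mem_sdiff.1 hbB
            set P : Finset E := insert c (X.erase x) with hPdef
            have hPG : P ∈ G := hcL
            have hPX : P ≠ X := fun h => hcX (h ▸ Finset.mem_insert_self _ _)
            have hbX'P : b ∈ X' \ P := by
              refine Finset.mem_sdiff.2 ⟨hbX', fun h => ?_⟩
              rcases Finset.mem_insert.1 h with h | h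
              · exact hbc h
              · exact hbX (Finset.mem_of_mem_erase h)
            have hltP : (X' \ P).card + (P \ X').card <
                (X \ X').card + (X' \ X).card := by
              have h0 := interval_card_lt' (hint P hPG).1 (hint P hPG).2 hPX
              omega
            rcases hIH X' hX' P hPG hltP b hbX'P with ⟨hX'b, _⟩ | ⟨v, hv, _, _⟩
            · refine chain _ w hwB hwU (X'.erase b) hX'b
                (fun h => hxX' (Finset.mem_of_mem_erase h))
                (Finset.mem_erase.2 ⟨fun h => hbw h.symm, hwX'⟩) ?_ rfl
              intro h
              exact (Finset.erase_eq_self.1 h) hbX'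
            · obtain ⟨hvP, hvX'⟩ := Finset.mem_sdiff.1 hv
              rcases Finset.mem_insert.1 hvP with h | h
              · exact hvX' (h ▸ hcX')
              · have hvA : v ∈ X \ X' :=
                  Finset.mem_sdiff.2 ⟨Finset.mem_of_mem_erase h, hvX'⟩
                rw [hAx, Finset.mem_singleton] at hvA
                exact (Finset.mem_erase.1 h).1 hvA
        · -- A1 : w ≠ y', so w ∈ W0 and we can run the chain directly
          have hwW0 : w ∈ W0 := by
            rw [hW0def]
            exact mem_move.2 (Or.inr ⟨hwX', hwy'⟩)
          exact chain _ w hwB hwU W0 hW0G hxW0 hwW0 hW0ne rfl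
      · -- CASE B : no upper witnesses at all
        push_neg at hUB
        by_cases hV0X : insert x (W0.erase c) = X
        · -- B2 (structural case) : W0 = insert c (X.erase x)
          have hWec : W0.erase c = X.erase x := by
            have h1 : (insert x (W0.erase c)).erase x = W0.erase c :=
              Finset.erase_insert (fun h => hxW0 (Finset.mem_of_mem_erase h))
            rw [hV0X] at h1
            exact h1.symm
          have hW0c : W0 = insert c (X.erase x) := by
            rw [← hWec, Finset.insert_erase hcW0]
          have hW0mem : ∀ t, t ∈ W0 ↔ (t = c ∨ (t ≠ x ∧ t ∈ X)) := by
            intro t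
            rw [hW0c]
            simp [Finset.mem_insert, Finset.mem_erase]
          have hmov : ∀ t, t ∈ W0 ↔ (y = some t ∨ (t ∈ X' ∧ y' ≠ some t)) := by
            intro t
            rw [hW0def]
            exact mem_move
          have hyc : y = none ∨ ∃ a0, y = some a0 := by
            rcases y with _ | a0
            · exact Or.inl rfl
            · exact Or.inr ⟨a0, rfl⟩
          have hy'c : y' = none ∨ ∃ b0, y' = some b0 := by
            rcases y' with _ | b0
            · exact Or.inl rfl
            · exact Or.inr ⟨b0, rfl⟩
          rcases hyc with hyc | ⟨a0, hyc⟩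
          · -- y = ∅ , y' = some b0 : n ≤ 3, contradiction
            have hy'some : ∃ b0, y' = some b0 := by
              rcases hy'c with hy'c | h
              · exact absurd (hyc.trans hy'c.symm) hyy'
              · exact h
            obtain ⟨b0, hy'c⟩ := hy'some
            have hA1 : X \ X' ⊆ {x} := by
              intro t ht
              obtain ⟨htX, htX'⟩ := Finset.mem_sdiff.1 ht
              rw [Finset.mem_singleton]
              by_contra htx
              have htW0 : t ∈ W0 := (hW0mem t).2 (Or.inr ⟨htx, htX⟩)
              rcases (hmov t).1 htW0 with h | ⟨h, _⟩
              · rw [hyc] at h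
                cases h
              · exact htX' h
            have hB1 : X' \ X ⊆ {b0, c} := by
              intro t ht
              obtain ⟨htX', htX⟩ := Finset.mem_sdiff.1 ht
              simp only [Finset.mem_insert, Finset.mem_singleton]
              by_contra hcon2
              push_neg at hcon2
              have htW0 : t ∈ W0 := (hmov t).2 (Or.inr ⟨htX', by
                rw [hy'c]
                intro h
                exact hcon2.1 (Option.some_injective _ h).symm⟩)
              rcases (hW0mem t).1 htW0 with h | ⟨_, h⟩
              · exact hcon2.2 h
              · exact htX h
            have hc1 := Finset.card_le_card hA1
            have hc2 := Finset.card_le_card hB1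
            rw [Finset.card_singleton] at hc1
            have hc3 : ({b0, c} : Finset E).card ≤ 2 :=
              (Finset.card_insert_le _ _).trans (by simp)
            exact hsmall (by omega)
          rcases hy'c with hy'c | ⟨b0, hy'c⟩
          · -- y = some a0, y' = ∅ : n ≤ 3, contradiction
            have hA1 : X \ X' ⊆ {x, a0} := by
              intro t ht
              obtain ⟨htX, htX'⟩ := Finset.mem_sdiff.1 ht
              simp only [Finset.mem_insert, Finset.mem_singleton]
              by_contra hcon2
              push_neg at hcon2
              have htW0 : t ∈ W0 := (hW0mem t).2 (Or.inr ⟨hcon2.1, htX⟩)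
              rcases (hmov t).1 htW0 with h | ⟨h, _⟩
              · rw [hyc] at h
                exact hcon2.2 (Option.some_injective _ h).symm
              · exact htX' h
            have hB1 : X' \ X ⊆ {c} := by
              intro t ht
              obtain ⟨htX', htX⟩ := Finset.mem_sdiff.1 ht
              rw [Finset.mem_singleton]
              have htW0 : t ∈ W0 := (hmov t).2 (Or.inr ⟨htX', by rw [hy'c]; intro h; cases h⟩)
              rcases (hW0mem t).1 htW0 with h | ⟨_, h⟩
              · exact h
              · exact absurd h htX
            have hc1 := Finset.card_le_card hA1
            have hc2 := Finset.card_le_card hB1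
            rw [Finset.card_singleton] at hc2
            have hc3 : ({x, a0} : Finset E).card ≤ 2 :=
              (Finset.card_insert_le _ _).trans (by simp)
            exact hsmall (by omega)
          -- both real : CONFIG-IV
          have ha0A : a0 ∈ X \ X' := hyA a0 hyc
          obtain ⟨ha0X, ha0X'⟩ := Finset.mem_sdiff.1 ha0A
          have hb0B : b0 ∈ X' \ X := hy'B b0 hy'c
          obtain ⟨hb0X', hb0X⟩ := Finset.mem_sdiff.1 hb0B
          have ha0x : a0 ≠ x := fun h => hyx (hyc.trans (congrArg some h))
          have hAsub : ∀ t, t ∈ X → t ∉ X' → t = x ∨ t = a0 := by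
            intro t htX htX'
            by_cases htx : t = x
            · exact Or.inl htx
            have htW0 : t ∈ W0 := (hW0mem t).2 (Or.inr ⟨htx, htX⟩)
            rcases (hmov t).1 htW0 with h | ⟨h, _⟩
            · rw [hyc] at h
              exact Or.inr (Option.some_injective _ h).symm
            · exact absurd h htX'
          have hBsub : ∀ t, t ∈ X' → t ∉ X → t = b0 ∨ t = c := by
            intro t htX' htX
            by_cases htb0 : t = b0
            · exact Or.inl htb0
            have htW0 : t ∈ W0 := (hmov t).2 (Or.inr ⟨htX', by
              rw [hy'c]
              intro h
              exact htb0 (Option.some_injective _ h).symm⟩)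
            rcases (hW0mem t).1 htW0 with h | ⟨_, h⟩
            · exact Or.inr h
            · exact absurd h htX
          have hb0c : b0 ≠ c := by
            intro h
            have : c ∈ W0 := hcW0
            rcases (hmov c).1 this with h' | ⟨_, h'⟩
            · rw [hyc] at h'
              exact hcX ((Option.some_injective _ h') ▸ ha0X)
            · rw [hy'c] at h'
              exact h' (congrArg some h)
          rw [hyc, hy'c] at hX1
          have hX1eq : move X (some a0) (some b0) = insert x (X'.erase c) := by
            rw [move_some_some]
            ext t
            simp only [Finset.mem_insert, Finset.mem_erase]
            constructor
            · rintro (h | ⟨hta, htX⟩)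
              · exact Or.inr ⟨fun he => hb0c (h.symm.trans he),
                  by rw [h]; exact hb0X'⟩
              · by_cases htX' : t ∈ X'
                · exact Or.inr ⟨fun he => hcX (he ▸ htX), htX'⟩
                · rcases hAsub t htX htX' with h' | h'
                  · exact Or.inl h'
                  · exact absurd h' hta
            · rintro (h | ⟨htc, htX'⟩)
              · exact Or.inr ⟨fun he => ha0x ((h.symm.trans he).symm), by rw [h]; exact hxX⟩
              · by_cases htX : t ∈ X
                · exact Or.inr ⟨fun he => ha0X' (he ▸ htX'), htX⟩
                · rcases hBsub t htX' htX with h' | h'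
                  · exact Or.inl h'
                  · exact absurd h' htc
          rw [hX1eq] at hX1
          exact hUB c hcB hX1
        · -- B1
          rcases lemma2 _ hV0 (Finset.mem_insert_self _ _) hV0X with ⟨hV0e, hR0⟩ |
            ⟨u, hu, _, huU⟩
          swap
          · obtain ⟨huX', huV0⟩ := Finset.mem_sdiff.1 hu
            have huX : u ∉ X := by
              intro h
              have hucore : u ∈ W0 := hcore W0 hW0G u h huX'
              have huc : u ≠ c := fun he => hcX (he ▸ h)
              exact huV0 (Finset.mem_insert_of_mem (Finset.mem_erase.2 ⟨huc, hucore⟩))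
            exact hUB u (Finset.mem_sdiff.2 ⟨huX', huX⟩) huU
          · have hcR0X : c ∈ (insert x X') \ X :=
              Finset.mem_sdiff.2 ⟨Finset.mem_insert_of_mem hcX', hcX⟩
            have hR0ne : insert x X' ≠ X' := fun h => hxX' (h ▸ Finset.mem_insert_self _ _)
            have hltR : ((insert x X') \ X).card + (X \ (insert x X')).card <
                (X \ X').card + (X' \ X).card := by
              have h0 := interval_card_lt (hint _ hR0).1 (hint _ hR0).2 hR0ne
              omega
            rcases hIH _ hR0 X hX hltR c hcR0X with ⟨hR0c, _⟩ | ⟨v, hv, _, hXv⟩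
            · have heq : (insert x X').erase c = insert x (X'.erase c) := by
                ext t
                simp only [Finset.mem_erase, Finset.mem_insert]
                constructor
                · rintro ⟨h1, h2 | h2⟩
                  · exact Or.inl h2
                  · exact Or.inr ⟨h1, h2⟩
                · rintro (h | ⟨h1, h2⟩)
                  · exact ⟨fun he => hcx (he.symm.trans h), Or.inl h⟩
                  · exact ⟨h1, Or.inr h2⟩
              rw [heq] at hR0c
              exact hUB c hcB hR0c
            · obtain ⟨hvX, hvR0⟩ := Finset.mem_sdiff.1 hv
              have hvx : v ≠ x := fun h => hvR0 (h ▸ Finset.mem_insert_self _ _)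
              have hvX' : v ∉ X' := fun h => hvR0 (Finset.mem_insert_of_mem h)
              have hMG : insert c (X.erase v) ∈ G := hXv
              have hxM : x ∈ insert c (X.erase v) :=
                Finset.mem_insert_of_mem (Finset.mem_erase.2 ⟨fun h => hvx h.symm, hxX⟩)
              have hMX : insert c (X.erase v) ≠ X :=
                fun h => hcX (h ▸ Finset.mem_insert_self _ _)
              rcases lemma2 _ hMG hxM hMX with ⟨hMe, _⟩ | ⟨u2, hu2, _, hu2U⟩
              swap
              · obtain ⟨hu2X', hu2M⟩ := Finset.mem_sdiff.1 hu2
                have hu2X : u2 ∉ X := by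
                  intro h
                  have hne2 : u2 ≠ v := fun he => hvX' (he ▸ hu2X')
                  exact hu2M (Finset.mem_insert_of_mem (Finset.mem_erase.2 ⟨hne2, h⟩))
                exact hUB u2 (Finset.mem_sdiff.2 ⟨hu2X', hu2X⟩) hu2U
              · -- Wb := (insert c (X.erase v)).erase x
                have hWbeq : (insert c (X.erase v)).erase x =
                    insert c ((X.erase v).erase x) := by
                  ext t
                  simp only [Finset.mem_erase, Finset.mem_insert]
                  constructor
                  · rintro ⟨h1, h2 | h2⟩
                    · exact Or.inl h2
                    · exact Or.inr ⟨h1, h2⟩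
                  · rintro (h | ⟨h1, h2⟩)
                    · exact ⟨fun he => hcx (h.symm.trans he), Or.inl h⟩
                    · exact ⟨h1, Or.inr h2⟩
                rw [hWbeq] at hMe
                have hxWb : x ∉ insert c ((X.erase v).erase x) := by
                  intro h
                  rcases Finset.mem_insert.1 h with h | h
                  · exact hcx h.symm
                  · exact (Finset.mem_erase.1 h).1 rfl
                have hWbne : insert c ((X.erase v).erase x) ≠ X' := by
                  intro h
                  have hB1 : X' \ X ⊆ {c} := by
                    intro t ht
                    obtain ⟨htX', htX⟩ := Finset.mem_sdiff.1 ht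
                    rw [← h] at htX'
                    rcases Finset.mem_insert.1 htX' with h' | h'
                    · exact Finset.mem_singleton.2 h'
                    · exact absurd (Finset.mem_of_mem_erase (Finset.mem_of_mem_erase h'))
                        htX
                  have hA1 : X \ X' ⊆ {x, v} := by
                    intro t ht
                    obtain ⟨htX, htX'⟩ := Finset.mem_sdiff.1 ht
                    simp only [Finset.mem_insert, Finset.mem_singleton]
                    by_contra hcon2
                    push_neg at hcon2
                    have : t ∈ insert c ((X.erase v).erase x) :=
                      Finset.mem_insert_of_mem (Finset.mem_erase.2 ⟨hcon2.1,
                        Finset.mem_erase.2 ⟨hcon2.2, htX⟩⟩)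
                    rw [h] at this
                    exact htX' this
                  have hc1 := Finset.card_le_card hB1
                  have hc2 := Finset.card_le_card hA1
                  rw [Finset.card_singleton] at hc1
                  have hc3 : ({x, v} : Finset E).card ≤ 2 :=
                    (Finset.card_insert_le _ _).trans (by simp)
                  exact hsmall (by omega)
                rcases lemma1 _ hMe hxWb hWbne with ⟨h1, _⟩ | ⟨z, hz, hzL2, hVb⟩
                · exact hnE h1
                · obtain ⟨hzWb, hzX2⟩ := Finset.mem_sdiff.1 hz
                  have hzc : z = c := by
                    rcases Finset.mem_insert.1 hzWb with h | h
                    · exact h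
                    · exact absurd (Finset.mem_of_mem_erase (Finset.mem_of_mem_erase h))
                        hzX2
                  subst hzc
                  -- V5 := insert x (Wb.erase z) = X.erase v
                  have hV5eq : (insert z ((X.erase v).erase x)).erase z =
                      (X.erase v).erase x := by
                    apply Finset.erase_insert
                    intro h
                    exact hzX2 (Finset.mem_of_mem_erase (Finset.mem_of_mem_erase h))
                  rw [hV5eq] at hVb
                  have hxV5 : x ∈ X.erase v := Finset.mem_erase.2 ⟨fun h => hvx h.symm, hxX⟩
                  have hV5eq2 : insert x ((X.erase v).erase x) = X.erase v :=
                    Finset.insert_erase hxV5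
                  rw [hV5eq2] at hVb
                  have hV5ne : X.erase v ≠ X := fun h => (Finset.erase_eq_self.1 h) hvX
                  rcases lemma2 _ hVb hxV5 hV5ne with ⟨hV5e, _⟩ | ⟨u3, hu3, _, hu3U⟩
                  swap
                  · obtain ⟨hu3X', hu3V5⟩ := Finset.mem_sdiff.1 hu3
                    have hu3X : u3 ∉ X := by
                      intro h
                      have hne3 : u3 ≠ v := fun he => hvX' (he ▸ hu3X')
                      exact hu3V5 (Finset.mem_erase.2 ⟨hne3, h⟩)
                    exact hUB u3 (Finset.mem_sdiff.2 ⟨hu3X', hu3X⟩) hu3U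
                  · have hxWe : x ∉ (X.erase v).erase x := fun h => (Finset.mem_erase.1 h).1 rfl
                    have hWene : (X.erase v).erase x ≠ X' := by
                      intro h
                      apply hcX
                      have hc2 : z ∈ (X.erase v).erase x := by rw [h]; exact hcX'
                      exact Finset.mem_of_mem_erase (Finset.mem_of_mem_erase hc2)
                    rcases lemma1 _ hV5e hxWe hWene with ⟨h1, _⟩ | ⟨z2, hz2, _, _⟩
                    · exact hnE h1
                    · obtain ⟨hz2We, hz2X⟩ := Finset.mem_sdiff.1 hz2
                      exact hz2X (Finset.mem_of_mem_erase (Finset.mem_of_mem_erase hz2We))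


lemma main_exchange : ∀ (n : ℕ) (G : Set (Finset E)), Dagger G → ∀ S ∈ G, ∀ T ∈ G,
    (S \ T).card + (T \ S).card ≤ n → ∀ e ∈ S \ T, exc G S T e := by
  intro n
  induction n with
  | zero =>
    intro G hD S hS T hT hcard e he
    rw [Nat.le_zero, Nat.add_eq_zero] at hcard
    rw [Finset.card_eq_zero.1 hcard.1] at he
    exact absurd he (Finset.notMem_empty e)
  | succ n ih =>
    intro G hD S hS T hT hcard e he
    by_cases hle : (S \ T).card + (T \ S).card ≤ n
    · exact ih G hD S hS T hT hle e he
    set G' : Set (Finset E) := {Z | Z ∈ G ∧ S ∩ T ⊆ Z ∧ Z ⊆ S ∪ T} with hG'def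
    have hDG' : Dagger G' := dagger_interval hD _ _
    have hSG' : S ∈ G' := ⟨hS, Finset.inter_subset_left, Finset.subset_union_left⟩
    have hTG' : T ∈ G' := ⟨hT, Finset.inter_subset_right, Finset.subset_union_right⟩
    have hIH' : ∀ P ∈ G', ∀ Q ∈ G',
        (P \ Q).card + (Q \ P).card < (S \ T).card + (T \ S).card →
        ∀ e' ∈ P \ Q, exc G' P Q e' := by
      intro P hP Q hQ hlt e' he'
      exact ih G' hDG' P hP Q hQ (by omega) e' he'
    have h1 := CL hSG' hTG' he hDG' (fun Z hZ => ⟨hZ.2.1, hZ.2.2⟩) hIH'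
    rcases h1 with h1 | ⟨w, hw, ha, hb⟩
    · -- primal gives the left half; use the dual family for the other half
      set Gd : Set (Finset E) := dualFam G' S T with hGd
      have hDGd : Dagger Gd := dualFam_dagger S T hDG'
      have hSGd : S ∈ Gd := by
        refine ⟨?_, Finset.inter_subset_left, Finset.subset_union_left⟩
        have : compl' S T S = T := compl'_self
        rw [this]; exact hTG'
      have hTGd : T ∈ Gd := by
        refine ⟨?_, Finset.inter_subset_right, Finset.subset_union_right⟩
        rw [show compl' S T T = S from compl'_self']
        exact hSG'
      have hIHd : ∀ P ∈ Gd, ∀ Q ∈ Gd,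
          (P \ Q).card + (Q \ P).card < (S \ T).card + (T \ S).card →
          ∀ e' ∈ P \ Q, exc Gd P Q e' := by
        intro P hP Q hQ hlt e' he'
        exact ih Gd hDGd P hP Q hQ (by omega) e' he'
      have h2 := CL hSGd hTGd he hDGd (fun Z hZ => ⟨hZ.2.1, hZ.2.2⟩) hIHd
      rcases h2 with h2 | ⟨w, hw, ha, hb⟩
      · -- both "empty" halves
        refine Or.inl ⟨h1.1, ?_⟩
        have := h2.1
        rw [compl'_erase_self he] at this
        exact this.1
      · -- dual real witness: translate back
        refine Or.inr ⟨w, hw, ?_, ?_⟩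
        · have := hb.1
          rw [compl'_witness' he hw] at this
          exact this.1
        · have := ha.1
          rw [compl'_witness he hw] at this
          exact this.1
    · exact Or.inr ⟨w, hw, ha.1, hb.1⟩

end Aux

theorem dagger_iff_mnatConvex {E : Type*} [DecidableEq E] [Fintype E]
    (F : Set (Finset E)) (hF : F.Nonempty) :
    Dagger F ↔ MnatConvex F := by
  constructor
  · intro hD X hX X' hX' x hx
    have h := main_exchange ((X \ X').card + (X' \ X).card) F hD X hX X' hX' le_rfl x hx
    exact exc_iff.1 h
  · intro hM
    apply dagger_of_cases
    intro S hS T hT hne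
    by_cases hST : (S \ T).Nonempty
    · obtain ⟨a, ha⟩ := hST
      obtain ⟨v, hv, h1, h2⟩ := hM S hS T hT a ha
      cases v with
      | none => exact Or.inl ⟨a, ha, by simpa using h1, by simpa using h2⟩
      | some b =>
        exact Or.inr (Or.inr ⟨a, ha, b, mem?_some.1 hv, by simpa using h1, by simpa using h2⟩)
    · have hTS : (T \ S).Nonempty := by
        rw [Finset.nonempty_iff_ne_empty]
        intro hTSe
        apply hne
        rw [Finset.not_nonempty_iff_eq_empty, Finset.sdiff_eq_empty_iff_subset] at hST
        rw [Finset.sdiff_eq_empty_iff_subset] at hTSe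
        exact Finset.Subset.antisymm hST hTSe
      obtain ⟨b, hb⟩ := hTS
      obtain ⟨v, hv, h1, h2⟩ := hM T hT S hS b hb
      have hvnone : v = none := by
        cases v with
        | none => rfl
        | some a =>
          have := mem?_some.1 hv
          rw [Finset.not_nonempty_iff_eq_empty] at hST
          rw [hST] at this
          exact absurd this (Finset.notMem_empty a)
      subst hvnone
      exact Or.inr (Or.inl ⟨b, hb, by simpa using h2, by simpa using h1⟩)
end OrdConc
end

section
/- Let u : 2^E → ℝ be an ordinally w-concave function on the subsets of a finite set E. For any Y ⊆ E with Y ∉ D*_u and any Z ∈ D*_u, there exist distinct x ∈ (Z \ Y) ∪ {∅} and y ∈ (Y \ Z) ∪ {∅} such that u(Y) < u(Y−y+x). -/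
namespace OrdConc

variable {E : Type*} [DecidableEq E]

lemma rem_subset (Z : Finset E) (x : Option E) : rem Z x ⊆ Z := by
  cases x with
  | none => exact Finset.Subset.refl _
  | some a => exact Finset.erase_subset a Z

lemma subA {Y Z : Finset E} {x x' : Option E}
    (hmx' : mem? x' (Y \ Z)) : move Z x x' \ Y ⊆ Z \ Y := by
  intro c hc
  rw [Finset.mem_sdiff] at hc ⊢
  obtain ⟨hc1, hc2⟩ := hc
  refine ⟨?_, hc2⟩
  cases x' with
  | none => exact rem_subset Z x hc1
  | some b =>
    have hb : b ∈ Y \ Z := hmx' b rfl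
    rcases Finset.mem_insert.mp hc1 with h | h
    · exact absurd (Finset.mem_sdiff.mp hb).1 (h ▸ hc2)
    · exact rem_subset Z x h

lemma subB {Y Z : Finset E} {x x' : Option E}
    (hmx : mem? x (Z \ Y)) : Y \ move Z x x' ⊆ Y \ Z := by
  intro c hc
  rw [Finset.mem_sdiff] at hc ⊢
  obtain ⟨hc1, hc2⟩ := hc
  refine ⟨hc1, fun hcZ => hc2 ?_⟩
  have hrem : c ∈ rem Z x := by
    cases x with
    | none => exact hcZ
    | some a =>
      have ha : a ∈ Z \ Y := hmx a rfl
      exact Finset.mem_erase.mpr ⟨fun h => (Finset.mem_sdiff.mp ha).2 (h ▸ hc1), hcZ⟩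
  cases x' with
  | none => exact hrem
  | some b => exact Finset.mem_insert_of_mem hrem

theorem exists_improving_exchange_toward_maximizer
    {E : Type*} [DecidableEq E] [Fintype E]
    (u : Finset E → ℝ) (hu : OrdinalWeakConcave u)
    (Y Z : Finset E) (hY : Y ∉ Dstar u) (hZ : Z ∈ Dstar u) :
    ∃ x y : Option E, x ≠ y ∧ mem? x (Z \ Y) ∧ mem? y (Y \ Z) ∧
      u Y < u (move Y y x) := by
  have main : ∀ n : ℕ, ∀ Z : Finset E, sdCard Y Z ≤ n → Z ∈ Dstar u →
      ∃ x y : Option E, x ≠ y ∧ mem? x (Z \ Y) ∧ mem? y (Y \ Z) ∧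
        u Y < u (move Y y x) := by
    intro n
    induction n with
    | zero =>
      intro Z hc hZ
      exfalso
      have hne : Y ≠ Z := fun h => hY (h ▸ hZ)
      have hemp : Y \ Z ∪ Z \ Y = ∅ := Finset.card_eq_zero.mp (Nat.le_zero.mp hc)
      rw [Finset.union_eq_empty] at hemp
      exact hne (Finset.Subset.antisymm
        (Finset.sdiff_eq_empty_iff_subset.mp hemp.1)
        (Finset.sdiff_eq_empty_iff_subset.mp hemp.2))
    | succ n ih =>
      intro Z hc hZ
      have hne : Z ≠ Y := fun h => hY (h ▸ hZ)
      obtain ⟨x, x', hxx', hmx, hmx', hcase⟩ := hu Z Y hne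
      rcases hcase with h1 | h2 | h3
      · exact absurd (hZ (move Z x x')) (not_le.mpr h1)
      · exact ⟨x, x', hxx', hmx, hmx', h2⟩
      · set Z' := move Z x x' with hZ'def
        have hZ'max : Z' ∈ Dstar u := by
          intro W
          have := hZ W
          rw [h3.1] at this
          exact this
        -- an element of the old symmetric difference not in the new one
        have hssub : Y \ Z' ∪ Z' \ Y ⊂ Y \ Z ∪ Z \ Y := by
          refine Finset.ssubset_iff_of_subset
            (Finset.union_subset_union (subB hmx) (subA hmx')) |>.mpr ?_
          cases x with
          | some a =>
            have ha : a ∈ Z \ Y := hmx a rfl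
            have haY : a ∉ Y := (Finset.mem_sdiff.mp ha).2
            refine ⟨a, Finset.mem_union_right _ ha, ?_⟩
            rw [Finset.mem_union, Finset.mem_sdiff, Finset.mem_sdiff]
            push_neg
            constructor
            · intro h; exact absurd h haY
            · intro haZ'
              exfalso
              have : a ∈ add (Finset.erase Z a) x' := haZ'
              cases x' with
              | none => exact absurd this (Finset.notMem_erase a Z)
              | some b =>
                rcases Finset.mem_insert.mp this with h | h
                · exact haY (h ▸ (Finset.mem_sdiff.mp (hmx' b rfl)).1)
                · exact absurd h (Finset.notMem_erase a Z)
          | none =>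
            cases x' with
            | none => exact absurd rfl hxx'
            | some b =>
              have hb : b ∈ Y \ Z := hmx' b rfl
              have hbY : b ∈ Y := (Finset.mem_sdiff.mp hb).1
              refine ⟨b, Finset.mem_union_left _ hb, ?_⟩
              rw [Finset.mem_union, Finset.mem_sdiff, Finset.mem_sdiff]
              push_neg
              constructor
              · intro _
                exact Finset.mem_insert_self b Z
              · intro _; exact hbY
        have hcard' : sdCard Y Z' ≤ n := by
          have hlt : sdCard Y Z' < sdCard Y Z := Finset.card_lt_card hssub
          omega
        obtain ⟨x₁, y₁, hne₁, hm₁, hm₂, hlt₁⟩ := ih Z' hcard' hZ'max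
        exact ⟨x₁, y₁, hne₁,
          fun a ha => subA hmx' (hm₁ a ha),
          fun a ha => subB hmx (hm₂ a ha), hlt₁⟩
  exact main (sdCard Y Z) Z le_rfl hZ
end OrdConc
end

section
/- Let u : 2^E → ℝ be an ordinally w-concave function on the subsets of a finite set E. For any X ⊆ E with X ∉ D*_u, letting X* be a maximizer of u minimizing |X Δ X*| over D*_u, there exist a positive integer k ≤ |E| and a sequence of distinct subsets Y_0 = X, Y_1, …, Y_k of E such that: (1) Y_i ∉ D*_u for each i ∈ {0,1,…,k−1}; (2) u(Y_0) < u(Y_1) < ⋯ < u(Y_k) and Y_k ∈ D*_u; (3) for each i ∈ {0,1,…,k−1}, Y_{i+1} = Y_i − y_i + x_i for some distinct y_i ∈ (Y_i \ X*) ∪ {∅} and x_i ∈ (X* \ Y_i) ∪ {∅}. -/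
namespace OrdConc

variable {E : Type*} [DecidableEq E]

/-!
Moving `X` along an exchange `X − y + x` with `y ∈ X \ X*` and `x ∈ X* \ X` shortens the
distance to `X*` and keeps `X*` a nearest maximizer, by the triangle inequality for `|· Δ ·|`.
Ordinal w-concavity applied to `(X, X*)` yields such an exchange: alternative (ii) is impossible
since `X*` is a maximizer, and (iii) would make `X* − x + y` a maximizer closer to `X` than `X*`;
so (i) holds and `u` strictly increases. Iterating gives the path, of length at most `|X Δ X*|`.
-/

lemma sdCard_eq_card_symmDiff (A B : Finset E) : sdCard A B = (symmDiff A B).card := rfl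

lemma sdCard_comm (A B : Finset E) : sdCard A B = sdCard B A := by
  simp only [sdCard_eq_card_symmDiff, symmDiff_comm]

lemma sdCard_eq_zero_iff {A B : Finset E} : sdCard A B = 0 ↔ A = B := by
  rw [sdCard_eq_card_symmDiff, Finset.card_eq_zero, ← Finset.bot_eq_empty, symmDiff_eq_bot]

lemma sdCard_le_card [Fintype E] (A B : Finset E) : sdCard A B ≤ Fintype.card E :=
  Finset.card_le_univ _

lemma sdCard_triangle (A B C : Finset E) : sdCard A C ≤ sdCard A B + sdCard B C := by
  simp only [sdCard_eq_card_symmDiff]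
  exact (Finset.card_le_card (symmDiff_triangle A B C)).trans (Finset.card_union_le _ _)

lemma sdCard_add_sdCard_of_inter_subset_of_subset_union {A B C : Finset E}
    (hAC : A ∩ C ⊆ B) (hB : B ⊆ A ∪ C) : sdCard A B + sdCard B C = sdCard A C := by
  have hmem (z : E) : (z ∈ A → z ∈ C → z ∈ B) ∧ (z ∈ B → z ∈ A ∨ z ∈ C) :=
    ⟨fun hA hC => hAC (Finset.mem_inter.2 ⟨hA, hC⟩), fun hz => Finset.mem_union.1 (hB hz)⟩
  have hsplit : symmDiff A C = symmDiff A B ∪ symmDiff B C := by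
    ext z
    have := hmem z
    simp only [Finset.mem_symmDiff, Finset.mem_union]
    tauto
  have hdisj : Disjoint (symmDiff A B) (symmDiff B C) := by
    refine Finset.disjoint_left.2 fun z => ?_
    have := hmem z
    simp only [Finset.mem_symmDiff]
    tauto
  simp only [sdCard_eq_card_symmDiff, hsplit, Finset.card_union_of_disjoint hdisj]

section Move

variable {A B : Finset E} {y x : Option E}

lemma inter_subset_move (hy : mem? y (A \ B)) : A ∩ B ⊆ move A y x := by
  intro z hz
  rcases y with _ | a <;> rcases x with _ | b <;> grind [move, rem, add, mem?]

lemma move_subset_union (hx : mem? x B) : move A y x ⊆ A ∪ B := by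
  intro z hz
  rcases y with _ | a <;> rcases x with _ | b <;> grind [move, rem, add, mem?]

lemma sdCard_add_sdCard_move (hy : mem? y (A \ B)) (hx : mem? x (B \ A)) :
    sdCard A (move A y x) + sdCard (move A y x) B = sdCard A B :=
  sdCard_add_sdCard_of_inter_subset_of_subset_union (inter_subset_move hy)
    (move_subset_union fun b hb => (Finset.mem_sdiff.1 (hx b hb)).1)

lemma sdCard_move_lt (hy : mem? y (A \ B)) (hx : mem? x (B \ A)) (hyx : y ≠ x) :
    sdCard (move A y x) B < sdCard A B := by
  have hne : move A y x ≠ A := by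
    rcases y with _ | a <;> rcases x with _ | b <;> grind [move, rem, add, mem?]
  have hpos : sdCard A (move A y x) ≠ 0 := fun h => hne (sdCard_eq_zero_iff.1 h).symm
  have := sdCard_add_sdCard_move hy hx
  omega

end Move

def IsNearestMaximizer (u : Finset E → ℝ) (X Xs : Finset E) : Prop :=
  Xs ∈ Dstar u ∧ ∀ Z ∈ Dstar u, sdCard X Xs ≤ sdCard X Z

lemma isNearestMaximizer_move {u : Finset E → ℝ} {X Xs : Finset E} {y x : Option E}
    (h : IsNearestMaximizer u X Xs) (hy : mem? y (X \ Xs)) (hx : mem? x (Xs \ X)) :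
    IsNearestMaximizer u (move X y x) Xs := by
  refine ⟨h.1, fun Z hZ => ?_⟩
  have hgeod := sdCard_add_sdCard_move hy hx
  have htri := sdCard_triangle X (move X y x) Z
  have hnear := h.2 Z hZ
  omega

lemma exists_improving_move {u : Finset E → ℝ} (hu : OrdinalWeakConcave u) {X Xs : Finset E}
    (hX : X ∉ Dstar u) (hXs : IsNearestMaximizer u X Xs) :
    ∃ y x : Option E, y ≠ x ∧ mem? y (X \ Xs) ∧ mem? x (Xs \ X) ∧ u X < u (move X y x) := by
  obtain ⟨y, x, hyx, hy, hx, hlt | hlt | ⟨-, heq⟩⟩ := hu X Xs (by rintro rfl; exact hX hXs.1)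
  · exact ⟨y, x, hyx, hy, hx, hlt⟩
  · exact absurd (hXs.1 _) hlt.not_ge
  · -- `move Xs x y` would be a maximizer strictly closer to `X` than `Xs`
    have hcloser := sdCard_move_lt hx hy hyx.symm
    have hnear := hXs.2 _ fun Z => (hXs.1 Z).trans heq.le
    rw [sdCard_comm, sdCard_comm X] at hnear
    omega

def IsImprovingStep (u : Finset E → ℝ) (Xs A B : Finset E) : Prop :=
  A ∉ Dstar u ∧ u A < u B ∧
    ∃ y x : Option E, y ≠ x ∧ mem? y (A \ Xs) ∧ mem? x (Xs \ A) ∧ B = move A y x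

theorem exists_improving_path {u : Finset E → ℝ} (hu : OrdinalWeakConcave u) {X Xs : Finset E}
    (hXs : IsNearestMaximizer u X Xs) :
    ∃ k ≤ sdCard X Xs, ∃ Y : ℕ → Finset E, Y 0 = X ∧ Y k ∈ Dstar u ∧
      ∀ i < k, IsImprovingStep u Xs (Y i) (Y (i + 1)) := by
  by_cases hX : X ∈ Dstar u
  · exact ⟨0, Nat.zero_le _, fun _ => X, rfl, hX, by simp⟩
  obtain ⟨y, x, hyx, hy, hx, hlt⟩ := exists_improving_move hu hX hXs
  have hcloser := sdCard_move_lt hy hx hyx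
  obtain ⟨k, hk, Y, hY0, hYk, hsteps⟩ :=
    exists_improving_path hu (isNearestMaximizer_move hXs hy hx)
  refine ⟨k + 1, by omega, fun | 0 => X | i + 1 => Y i, rfl, hYk, ?_⟩
  rintro (_ | i) hi
  · show IsImprovingStep u Xs X (Y 0)
    rw [hY0]
    exact ⟨hX, hlt, y, x, hyx, hy, hx, rfl⟩
  · exact hsteps i (by omega)
termination_by sdCard X Xs

theorem exists_increasing_path_to_maximizer
    {E : Type*} [DecidableEq E] [Fintype E]
    (u : Finset E → ℝ) (hu : OrdinalWeakConcave u)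
    (X Xs : Finset E) (hX : X ∉ Dstar u) (hXs : Xs ∈ Dstar u)
    (hmin : ∀ Z ∈ Dstar u, sdCard X Xs ≤ sdCard X Z) :
    ∃ k : ℕ, 0 < k ∧ k ≤ Fintype.card E ∧ ∃ Y : ℕ → Finset E,
      Y 0 = X ∧
      (∀ i ≤ k, ∀ j ≤ k, i ≠ j → Y i ≠ Y j) ∧
      (∀ i < k, Y i ∉ Dstar u) ∧
      (∀ i < k, u (Y i) < u (Y (i + 1))) ∧
      Y k ∈ Dstar u ∧
      (∀ i < k, ∃ y x : Option E, y ≠ x ∧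
        mem? y (Y i \ Xs) ∧ mem? x (Xs \ Y i) ∧
        Y (i + 1) = move (Y i) y x) := by
  obtain ⟨k, hk, Y, hY0, hYk, hsteps⟩ := exists_improving_path hu ⟨hXs, hmin⟩
  have hk0 : 0 < k := Nat.pos_of_ne_zero fun h => hX (hY0 ▸ h ▸ hYk)
  have hmono : StrictMonoOn (u ∘ Y) (Set.Iic k) :=
    strictMonoOn_Iic_of_lt_succ fun i hi => (hsteps i hi).2.1
  refine ⟨k, hk0, hk.trans (sdCard_le_card X Xs), Y, hY0,
    fun i hi j hj hij hY => hij (hmono.injOn hi hj (congrArg u hY)),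
    fun i hi => (hsteps i hi).1, fun i hi => (hsteps i hi).2.1, hYk,
    fun i hi => (hsteps i hi).2.2⟩
end OrdConc
end

section
/- Let u : 2^E → ℝ be an ordinally w-concave function on the subsets of a finite set E. For any Z ∈ D*_u of minimum cardinality |Z| among all members of D*_u, there exists a linear ordering L = (e_1, …, e_k) of the elements of Z such that u(∅) < u(L_1) < u(L_2) < ⋯ < u(L_k), where L_i = {e_1, …, e_i} and L_k = Z. -/
namespace OrdConc

variable {E : Type*} [DecidableEq E]

lemma step_exists {E : Type*} [DecidableEq E] (u : Finset E → ℝ)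
    (hu : OrdinalWeakConcave u) (Z : Finset E) (hZ : Z ∈ Dstar u)
    (hmin : ∀ W ∈ Dstar u, Z.card ≤ W.card)
    (X : Finset E) (hXZ : X ⊆ Z) (hne : X ≠ Z) :
    ∃ e ∈ Z, e ∉ X ∧ u X < u (insert e X) := by
  obtain ⟨x, x', hxx', hx, hx', hcase⟩ := hu X Z hne
  have hXdiff : X \ Z = ∅ := Finset.sdiff_eq_empty_iff_subset.mpr hXZ
  have hxnone : x = none := by
    cases x with
    | none => rfl
    | some a =>
      have := hx a rfl
      rw [hXdiff] at this
      exact absurd this (Finset.notMem_empty a)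
  subst hxnone
  obtain ⟨e, rfl⟩ : ∃ e, x' = some e := by
    cases x' with
    | none => exact absurd rfl hxx'
    | some e => exact ⟨e, rfl⟩
  have he : e ∈ Z \ X := hx' e rfl
  have heZ : e ∈ Z := (Finset.mem_sdiff.mp he).1
  have heX : e ∉ X := (Finset.mem_sdiff.mp he).2
  have hmove1 : move X (none : Option E) (some e) = insert e X := rfl
  have hmove2 : move Z (some e) (none : Option E) = Z.erase e := rfl
  refine ⟨e, heZ, heX, ?_⟩
  rcases hcase with h | h | ⟨h1, h2⟩
  · rwa [hmove1] at h
  · rw [hmove2] at h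
    exact absurd (hZ (Z.erase e)) (not_le.mpr h)
  · exfalso
    rw [hmove2] at h2
    have hmem : Z.erase e ∈ Dstar u := fun W => h2 ▸ hZ W
    have := hmin _ hmem
    have hc : (Z.erase e).card < Z.card := Finset.card_erase_lt_of_mem heZ
    omega

theorem exists_increasing_ordering_of_min_maximizer
    {E : Type*} [DecidableEq E] [Fintype E]
    (u : Finset E → ℝ) (hu : OrdinalWeakConcave u)
    (Z : Finset E) (hZ : Z ∈ Dstar u)
    (hmin : ∀ W ∈ Dstar u, Z.card ≤ W.card) :
    ∃ L : List E, L.Nodup ∧ L.toFinset = Z ∧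
      ∀ i < L.length, u (L.take i).toFinset < u (L.take (i + 1)).toFinset := by
  suffices h : ∀ n (X : Finset E), X ⊆ Z → (Z \ X).card = n →
      ∃ L : List E, L.Nodup ∧ (∀ e ∈ L, e ∉ X) ∧ X ∪ L.toFinset = Z ∧
        ∀ i < L.length, u (X ∪ (L.take i).toFinset) < u (X ∪ (L.take (i + 1)).toFinset) by
    obtain ⟨L, h1, h2, h3, h4⟩ := h (Z \ ∅).card ∅ (Finset.empty_subset Z) rfl
    refine ⟨L, h1, by simpa using h3, fun i hi => by simpa using h4 i hi⟩
  intro n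
  induction n with
  | zero =>
    intro X hXZ hcard
    have hXeq : X = Z :=
      Finset.Subset.antisymm hXZ
        (Finset.sdiff_eq_empty_iff_subset.mp (Finset.card_eq_zero.mp hcard))
    exact ⟨[], by simp, by simp, by simp [hXeq], by simp⟩
  | succ n ih =>
    intro X hXZ hcard
    have hne : X ≠ Z := by
      intro h
      simp [h] at hcard
    obtain ⟨e, heZ, heX, hlt⟩ := step_exists u hu Z hZ hmin X hXZ hne
    have hXZ' : insert e X ⊆ Z := Finset.insert_subset heZ hXZ
    have hcard' : (Z \ insert e X).card = n := by
      have hd : Z \ insert e X = (Z \ X).erase e := by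
        ext a
        simp only [Finset.mem_sdiff, Finset.mem_erase, Finset.mem_insert]
        tauto
      rw [hd, Finset.card_erase_of_mem (Finset.mem_sdiff.mpr ⟨heZ, heX⟩), hcard]
      omega
    obtain ⟨L, h1, h2, h3, h4⟩ := ih (insert e X) hXZ' hcard'
    refine ⟨e :: L, ?_, ?_, ?_, ?_⟩
    · exact List.nodup_cons.mpr ⟨fun h => h2 e h (Finset.mem_insert_self e X), h1⟩
    · intro f hf
      rcases List.mem_cons.mp hf with rfl | hf
      · exact heX
      · exact fun hfX => h2 f hf (Finset.mem_insert_of_mem hfX)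
    · rw [List.toFinset_cons, Finset.union_insert, ← Finset.insert_union]
      exact h3
    · intro i hi
      cases i with
      | zero =>
        have he1 : X ∪ ({e} : Finset E) = insert e X := by
          ext a; simp [or_comm]
        simpa [he1] using hlt
      | succ j =>
        have hj : j < L.length := Nat.lt_of_succ_lt_succ (by simpa using hi)
        have := h4 j hj
        simpa [List.take_cons, Finset.union_insert, Finset.insert_union] using this
end OrdConc
end

section
/- Let u : 2^E → ℝ be an ordinally w-concave function on the subsets of a finite set E. Then a set X ⊆ E is a global maximizer of u if and only if u(X) ≥ u(Z) for all Z in the neighborhood N(X). -/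
namespace OrdConc

variable {E : Type*} [DecidableEq E]

lemma sd_decrease {E : Type*} [DecidableEq E] {X Z : Finset E} {x x' : Option E}
    (hne : x ≠ x') (hx : mem? x (X \ Z)) (hx' : mem? x' (Z \ X)) :
    sdCard X (move Z x' x) < sdCard X Z := by
  apply Finset.card_lt_card
  match x, x' with
  | none, none => exact absurd rfl hne
  | some a, none =>
    have haX : a ∈ X := (Finset.mem_sdiff.1 (hx a rfl)).1
    have haZ : a ∉ Z := (Finset.mem_sdiff.1 (hx a rfl)).2
    constructor
    · intro e he
      simp only [move, add, rem, Option.elim, Finset.mem_union, Finset.mem_sdiff,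
        Finset.mem_insert] at he ⊢
      aesop
    · intro hsub
      have := hsub (by
        simp only [Finset.mem_union, Finset.mem_sdiff]; tauto : a ∈ X \ Z ∪ Z \ X)
      simp only [move, add, rem, Option.elim, Finset.mem_union, Finset.mem_sdiff,
        Finset.mem_insert] at this
      tauto
  | none, some b =>
    have hbZ : b ∈ Z := (Finset.mem_sdiff.1 (hx' b rfl)).1
    have hbX : b ∉ X := (Finset.mem_sdiff.1 (hx' b rfl)).2
    constructor
    · intro e he
      simp only [move, add, rem, Option.elim, Finset.mem_union, Finset.mem_sdiff,
        Finset.mem_erase] at he ⊢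
      aesop
    · intro hsub
      have := hsub (by
        simp only [Finset.mem_union, Finset.mem_sdiff]; tauto : b ∈ X \ Z ∪ Z \ X)
      simp only [move, add, rem, Option.elim, Finset.mem_union, Finset.mem_sdiff,
        Finset.mem_erase] at this
      tauto
  | some a, some b =>
    have haX : a ∈ X := (Finset.mem_sdiff.1 (hx a rfl)).1
    have haZ : a ∉ Z := (Finset.mem_sdiff.1 (hx a rfl)).2
    have hbZ : b ∈ Z := (Finset.mem_sdiff.1 (hx' b rfl)).1
    have hbX : b ∉ X := (Finset.mem_sdiff.1 (hx' b rfl)).2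
    have hab : a ≠ b := fun h => hbX (h ▸ haX)
    constructor
    · intro e he
      simp only [move, add, rem, Option.elim, Finset.mem_union, Finset.mem_sdiff,
        Finset.mem_insert, Finset.mem_erase] at he ⊢
      aesop
    · intro hsub
      have := hsub (by
        simp only [Finset.mem_union, Finset.mem_sdiff]; tauto : a ∈ X \ Z ∪ Z \ X)
      simp only [move, add, rem, Option.elim, Finset.mem_union, Finset.mem_sdiff,
        Finset.mem_insert, Finset.mem_erase] at this
      aesop

theorem local_max_iff_global_max {E : Type*} [DecidableEq E] [Fintype E]
    (u : Finset E → ℝ) (hu : OrdinalWeakConcave u) (X : Finset E) :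
    X ∈ Dstar u ↔ ∀ Z ∈ Nbhd X, u Z ≤ u X := by
  constructor
  · intro hX Z _; exact hX Z
  · intro hloc
    suffices h : ∀ n, ∀ Z : Finset E, sdCard X Z ≤ n → u Z ≤ u X by
      intro Z; exact h (sdCard X Z) Z le_rfl
    intro n
    induction n with
    | zero =>
      intro Z hZ
      have h0 : (X \ Z ∪ Z \ X).card = 0 := Nat.le_antisymm hZ (Nat.zero_le _)
      have he : X \ Z ∪ Z \ X = ∅ := Finset.card_eq_zero.mp h0
      rw [Finset.union_eq_empty] at he
      have hXZ : X = Z :=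
        Finset.Subset.antisymm (Finset.sdiff_eq_empty_iff_subset.mp he.1)
          (Finset.sdiff_eq_empty_iff_subset.mp he.2)
      rw [hXZ]
    | succ n ih =>
      intro Z hZ
      by_cases hXZ : X = Z
      · rw [hXZ]
      · obtain ⟨x, x', hne, hx, hx', hcase⟩ := hu X Z hXZ
        have hnb : move X x x' ∈ Nbhd X := by
          refine ⟨x, x', fun a ha => (Finset.mem_sdiff.1 (hx a ha)).1,
            fun a ha => Finset.mem_sdiff.2
              ⟨Finset.mem_univ a, (Finset.mem_sdiff.1 (hx' a ha)).2⟩, rfl⟩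
        have h1 := hloc _ hnb
        have hsd := sd_decrease hne hx hx'
        have h2 := ih (move Z x' x) (by omega)
        rcases hcase with h | h | ⟨h3, h4⟩
        · linarith
        · linarith
        · linarith
end OrdConc
end

section
/- Let u : 2^E → ℝ be an ordinally concave function on the subsets of a finite set E. For any X ⊆ E with X ∉ D*_u, there exist a positive integer k ≤ |E| and a sequence of distinct subsets Y_0 = X, Y_1, …, Y_k of E such that: (1) Y_i ∉ D*_u for each i ∈ {0,1,…,k−1}; (2) u(Y_0) < u(Y_1) < ⋯ < u(Y_k) and Y_k ∈ D*_u; (3) there is an integer ℓ with 0 ≤ ℓ ≤ k such that (a) for each i ∈ {0,1,…,ℓ−1}, Y_{i+1} = Y_i − x_i + x_i' for some x_i ∈ Y_i \ Y_{i+1} and x_i' ∈ (Y_{i+1} \ Y_i) ∪ {∅}, and (b) for each i ∈ {ℓ,…,k−1}, Y_{i+1} = Y_i + x_i' for some x_i' ∈ Y_{i+1} \ Y_i. -/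
namespace OrdConc

variable {E : Type*} [DecidableEq E]

/-! Fix a global maximizer `Z` and walk from `X` towards it. For `x ∈ X \ Z`, ordinal concavity
applied to `X`, `Z`, `x` gives a partner `x'` such that either `X − x + x'` is strictly better
than `X`, or (as nothing beats `Z`) `Z − x' + x` is another maximizer, closer to `X`. Once
`X ⊆ Z`, the same exchange taken from the side of `Z` has partner `∅` and so inserts an element
into `X`. Every step shrinks `X Δ Z`, so the path has at most `|E|` steps. -/

section Steps

variable {A B : Finset E} {a b : Option E}

lemma move_sdiff (ha : mem? a (A \ B)) (hb : mem? b (B \ A)) :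
    move A a b \ B = rem (A \ B) a := by
  cases a <;> cases b <;> ext <;> simp [mem?, move, rem, add] at * <;> grind

lemma sdiff_move (ha : mem? a (A \ B)) (hb : mem? b (B \ A)) :
    B \ move A a b = rem (B \ A) b := by
  cases a <;> cases b <;> ext <;> simp [mem?, move, rem, add] at * <;> grind

lemma card_rem_le (S : Finset E) (b : Option E) : (rem S b).card ≤ S.card := by
  cases b
  · exact le_rfl
  · exact Finset.card_erase_le

lemma card_sdiff_add_card_sdiff_le [Fintype E] (A B : Finset E) :
    (A \ B).card + (B \ A).card ≤ Fintype.card E :=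
  (Finset.card_union_of_disjoint disjoint_sdiff_sdiff).symm.le.trans (Finset.card_le_univ _)

def IsExchangeStep (A B : Finset E) : Prop :=
  ∃ x ∈ A \ B, ∃ x' : Option E, mem? x' (B \ A) ∧ B = move A (some x) x'

def IsInsertionStep (A B : Finset E) : Prop :=
  ∃ x' ∈ B \ A, B = insert x' A

lemma isExchangeStep_move {x : E} (hx : x ∈ A) (hb : mem? b (B \ A)) :
    IsExchangeStep A (move A (some x) b) := by
  cases b with
  | none => exact ⟨x, by simp [move, rem, add, hx], none, nofun, rfl⟩
  | some c =>
    have hc : c ∉ A := (Finset.mem_sdiff.1 (hb c rfl)).2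
    have hxc : x ≠ c := fun h => hc (h ▸ hx)
    refine ⟨x, ?_, some c, fun d hd => ?_, rfl⟩
    · simp [move, rem, add, hx, hxc]
    · cases hd
      simp [move, rem, add, hc]

lemma isInsertionStep_insert {x : E} (hx : x ∉ A) : IsInsertionStep A (insert x A) :=
  ⟨x, by simp [hx], rfl⟩

end Steps

section Climb

variable {u : Finset E → ℝ} {X Z : Finset E}

lemma OrdinalConcave.exists_exchange_or_mem_dstar (hu : OrdinalConcave u) (hZ : Z ∈ Dstar u)
    {x : E} (hx : x ∈ X \ Z) :
    ∃ x', mem? x' (Z \ X) ∧ (u X < u (move X (some x) x') ∨ move Z x' (some x) ∈ Dstar u) := by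
  obtain ⟨x', hx', hlt | hlt | ⟨-, heq⟩⟩ := hu X Z x hx
  · exact ⟨x', hx', Or.inl hlt⟩
  · exact absurd (hZ _) hlt.not_ge
  · exact ⟨x', hx', Or.inr fun W => (hZ W).trans heq.le⟩

lemma OrdinalConcave.lt_insert_or_erase_mem_dstar (hu : OrdinalConcave u) (hZ : Z ∈ Dstar u)
    (hXZ : X ⊆ Z) {x : E} (hx : x ∈ Z \ X) :
    u X < u (insert x X) ∨ Z.erase x ∈ Dstar u := by
  obtain ⟨x', hx', hcases⟩ := hu Z X x hx
  obtain rfl : x' = none := Option.eq_none_iff_forall_ne_some.2 fun c hc =>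
    (Finset.mem_sdiff.1 (hx' c hc)).2 (hXZ (Finset.mem_sdiff.1 (hx' c hc)).1)
  rcases hcases with hlt | hlt | ⟨heq, -⟩
  · exact absurd (hZ _) hlt.not_ge
  · exact Or.inl hlt
  · exact Or.inr fun W => (hZ W).trans heq.le

structure IsClimb (u : Finset E → ℝ) (Y : ℕ → Finset E) (k l : ℕ) : Prop where
  lt_succ : ∀ i < k, u (Y i) < u (Y (i + 1))
  mem_dstar : Y k ∈ Dstar u
  le : l ≤ k
  exchange : ∀ i < l, IsExchangeStep (Y i) (Y (i + 1))
  insertion : ∀ i, l ≤ i → i < k → IsInsertionStep (Y i) (Y (i + 1))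

lemma isClimb_const (hZ : Z ∈ Dstar u) : IsClimb u (fun _ => Z) 0 0 :=
  ⟨nofun, hZ, le_rfl, nofun, fun _ _ h => absurd h (Nat.not_lt_zero _)⟩

namespace IsClimb

variable {Y : ℕ → Finset E} {k l : ℕ}

lemma cons_exchange (h : IsClimb u Y k l) (hlt : u X < u (Y 0))
    (hstep : IsExchangeStep X (Y 0)) : IsClimb u (Stream'.cons X Y) (k + 1) (l + 1) where
  lt_succ
    | 0, _ => hlt
    | i + 1, hi => h.lt_succ i (by omega)
  mem_dstar := h.mem_dstar
  le := Nat.succ_le_succ h.le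
  exchange
    | 0, _ => hstep
    | i + 1, hi => h.exchange i (by omega)
  insertion
    | 0, hl, _ => absurd hl (by omega)
    | i + 1, hl, hi => h.insertion i (by omega) (by omega)

lemma cons_insertion (h : IsClimb u Y k 0) (hlt : u X < u (Y 0))
    (hstep : IsInsertionStep X (Y 0)) : IsClimb u (Stream'.cons X Y) (k + 1) 0 where
  lt_succ
    | 0, _ => hlt
    | i + 1, hi => h.lt_succ i (by omega)
  mem_dstar := h.mem_dstar
  le := Nat.zero_le _
  exchange := nofun
  insertion
    | 0, _, _ => hstep
    | i + 1, _, hi => h.insertion i (by omega) (by omega)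

lemma strictMonoOn (h : IsClimb u Y k l) : StrictMonoOn (u ∘ Y) (Set.Iic k) :=
  strictMonoOn_Iic_of_lt_succ h.lt_succ

lemma injOn (h : IsClimb u Y k l) : Set.InjOn Y (Set.Iic k) :=
  fun _ hi _ hj hij => h.strictMonoOn.injOn hi hj (congrArg u hij)

lemma notMem_dstar (h : IsClimb u Y k l) {i : ℕ} (hi : i < k) : Y i ∉ Dstar u :=
  fun hY => (h.strictMonoOn (Set.mem_Iic.2 hi.le) Set.self_mem_Iic hi).not_ge (hY (Y k))

end IsClimb

theorem OrdinalConcave.exists_insertion_climb (hu : OrdinalConcave u) {X Z : Finset E}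
    (hZ : Z ∈ Dstar u) (hXZ : X ⊆ Z) :
    ∃ k ≤ (Z \ X).card, ∃ Y : ℕ → Finset E, Y 0 = X ∧ IsClimb u Y k 0 := by
  obtain hZX | ⟨x, hx⟩ := (Z \ X).eq_empty_or_nonempty
  · obtain rfl : X = Z := hXZ.antisymm (Finset.sdiff_eq_empty_iff_subset.1 hZX)
    exact ⟨0, Nat.zero_le _, _, rfl, isClimb_const hZ⟩
  have hcard : ((Z \ X).erase x).card + 1 = (Z \ X).card := Finset.card_erase_add_one hx
  obtain ⟨hxZ, hxX⟩ := Finset.mem_sdiff.1 hx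
  rcases hu.lt_insert_or_erase_mem_dstar hZ hXZ hx with hlt | hZ'
  · have hdec : (Z \ insert x X).card < (Z \ X).card := by rw [Finset.sdiff_insert]; omega
    obtain ⟨k, hk, Y, hY0, hY⟩ := hu.exists_insertion_climb hZ (Finset.insert_subset hxZ hXZ)
    rw [Finset.sdiff_insert] at hk
    exact ⟨k + 1, by omega, _, rfl,
      hY.cons_insertion (hY0 ▸ hlt) (hY0 ▸ isInsertionStep_insert hxX)⟩
  · have hdec : (Z.erase x \ X).card < (Z \ X).card := by rw [Finset.erase_sdiff_comm]; omega
    obtain ⟨k, hk, Y, rfl, hY⟩ := hu.exists_insertion_climb hZ'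
      (Finset.subset_erase.2 ⟨hXZ, hxX⟩)
    rw [Finset.erase_sdiff_comm] at hk
    exact ⟨k, by omega, Y, rfl, hY⟩
termination_by (Z \ X).card

theorem OrdinalConcave.exists_climb (hu : OrdinalConcave u) {X Z : Finset E}
    (hZ : Z ∈ Dstar u) :
    ∃ k ≤ (X \ Z).card + (Z \ X).card,
      ∃ (Y : ℕ → Finset E) (l : ℕ), Y 0 = X ∧ IsClimb u Y k l := by
  obtain hXZ | ⟨x, hx⟩ := (X \ Z).eq_empty_or_nonempty
  · obtain ⟨k, hk, Y, hY0, hY⟩ :=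
      hu.exists_insertion_climb hZ (Finset.sdiff_eq_empty_iff_subset.1 hXZ)
    exact ⟨k, by omega, Y, 0, hY0, hY⟩
  have hcard : (rem (X \ Z) (some x)).card + 1 = (X \ Z).card := Finset.card_erase_add_one hx
  have hxX : mem? (some x) (X \ Z) := fun _ h => Option.some_inj.1 h ▸ hx
  obtain ⟨x', hx', hlt | hZ'⟩ := hu.exists_exchange_or_mem_dstar hZ hx
  · have hsd := move_sdiff hxX hx'
    have hds := sdiff_move hxX hx'
    have hrem := card_rem_le (Z \ X) x'
    have hdec : (move X (some x) x' \ Z).card < (X \ Z).card := by rw [hsd]; omega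
    obtain ⟨k, hk, Y, l, hY0, hY⟩ := hu.exists_climb (X := move X (some x) x') hZ
    rw [hsd, hds] at hk
    exact ⟨k + 1, by omega, _, l + 1, rfl,
      hY.cons_exchange (hY0 ▸ hlt) (hY0 ▸ isExchangeStep_move (Finset.mem_sdiff.1 hx).1 hx')⟩
  · have hsd := move_sdiff hx' hxX
    have hds := sdiff_move hx' hxX
    have hrem := card_rem_le (Z \ X) x'
    have hdec : (X \ move Z x' (some x)).card < (X \ Z).card := by rw [hds]; omega
    obtain ⟨k, hk, Y, l, hY0, hY⟩ := hu.exists_climb (X := X) hZ'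
    rw [hsd, hds] at hk
    exact ⟨k, by omega, Y, l, hY0, hY⟩
termination_by (X \ Z).card

end Climb

theorem exists_increasing_path_to_maximizer_ordConcave
    {E : Type*} [DecidableEq E] [Fintype E]
    (u : Finset E → ℝ) (hu : OrdinalConcave u)
    (X : Finset E) (hX : X ∉ Dstar u) :
    ∃ k : ℕ, 0 < k ∧ k ≤ Fintype.card E ∧ ∃ Y : ℕ → Finset E,
      Y 0 = X ∧
      (∀ i ≤ k, ∀ j ≤ k, i ≠ j → Y i ≠ Y j) ∧
      (∀ i < k, Y i ∉ Dstar u) ∧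
      (∀ i < k, u (Y i) < u (Y (i + 1))) ∧
      Y k ∈ Dstar u ∧
      (∃ l : ℕ, l ≤ k ∧
        (∀ i < l, ∃ xi ∈ Y i \ Y (i + 1), ∃ x' : Option E,
          mem? x' (Y (i + 1) \ Y i) ∧ Y (i + 1) = move (Y i) (some xi) x') ∧
        (∀ i : ℕ, l ≤ i → i < k →
          ∃ x' ∈ Y (i + 1) \ Y i, Y (i + 1) = insert x' (Y i))) := by
  obtain ⟨Z, -, hZ⟩ := Finset.exists_max_image Finset.univ u Finset.univ_nonempty
  obtain ⟨k, hk, Y, l, rfl, hY⟩ := hu.exists_climb (X := X) (fun W => hZ W (Finset.mem_univ W))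
  have hk0 : 0 < k := Nat.pos_of_ne_zero fun h => hX (h ▸ hY.mem_dstar)
  exact ⟨k, hk0, hk.trans (card_sdiff_add_card_sdiff_le _ _), Y, rfl,
    fun i hi j hj hij hYij => hij (hY.injOn hi hj hYij), fun i hi => hY.notMem_dstar hi,
    hY.lt_succ, hY.mem_dstar, l, hY.le, hY.exchange, hY.insertion⟩

end OrdConc
end

section
/- Let u : 2^E → ℝ be an ordinally concave function on the subsets of a finite set E, and let X ∈ D*_u have minimum cardinality among all members of D*_u. Then for every linear ordering L = (e_1, …, e_k) of the elements of X we have u(∅) < u(L_1) < u(L_2) < ⋯ < u(L_k), where L_i = {e_1,…,e_i} and L_k = X. -/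
namespace OrdConc

variable {E : Type*} [DecidableEq E]

/-!
Let `Y = L_i` and `x = e_{i+1}`. Since `Y ⊆ X`, the exchange that ordinal concavity provides
for `X`, `Y` and `x ∈ X \ Y` can only be `x' = ∅`: it compares `u(X)` with `u(X − x)` and
`u(Y)` with `u(Y + x)`. As `X` is a maximizer of minimum cardinality, `u(X − x) < u(X)`,
which rules out the first and third alternatives and leaves `u(Y) < u(Y + x)`.
-/

theorem _root_.List.toFinset_take_add_one {α : Type*} [DecidableEq α] (L : List α) {i : ℕ}
    (hi : i < L.length) : (L.take (i + 1)).toFinset = insert L[i] (L.take i).toFinset := by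
  rw [← List.take_concat_get' L i hi, List.toFinset_append, Finset.union_comm]
  rfl

theorem _root_.List.Nodup.getElem_notMem_take {α : Type*} {L : List α} (hnd : L.Nodup) {i : ℕ}
    (hi : i < L.length) : L[i] ∉ L.take i := fun hmem =>
  List.disjoint_take_drop hnd le_rfl hmem
    (by rw [List.drop_eq_getElem_cons hi]; exact List.mem_cons_self)

theorem eq_none_of_mem?_sdiff {x' : Option E} {X Y : Finset E} (hYX : Y ⊆ X)
    (hx' : mem? x' (Y \ X)) : x' = none := by
  cases x' with
  | none => rfl
  | some a =>
    obtain ⟨haY, haX⟩ := Finset.mem_sdiff.1 (hx' a rfl)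
    exact absurd (hYX haY) haX

theorem OrdinalConcave.exchange_of_subset {u : Finset E → ℝ} (hu : OrdinalConcave u)
    {X Y : Finset E} (hYX : Y ⊆ X) {x : E} (hxX : x ∈ X) (hxY : x ∉ Y) :
    u X < u (X.erase x) ∨ u Y < u (insert x Y) ∨
      (u X = u (X.erase x) ∧ u Y = u (insert x Y)) := by
  obtain ⟨x', hx', h⟩ := hu X Y x (Finset.mem_sdiff.2 ⟨hxX, hxY⟩)
  rwa [eq_none_of_mem?_sdiff hYX hx'] at h

theorem erase_lt_of_mem_Dstar_of_card_min {u : Finset E → ℝ} {X : Finset E} (hX : X ∈ Dstar u)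
    (hmin : ∀ W ∈ Dstar u, X.card ≤ W.card) {x : E} (hx : x ∈ X) : u (X.erase x) < u X := by
  by_contra! hle
  have hmax : X.erase x ∈ Dstar u := fun Z => (hX Z).trans hle
  exact (hmin _ hmax).not_gt (Finset.card_erase_lt_of_mem hx)

theorem OrdinalConcave.lt_insert_of_subset_of_mem_Dstar {u : Finset E → ℝ}
    (hu : OrdinalConcave u) {X : Finset E} (hX : X ∈ Dstar u)
    (hmin : ∀ W ∈ Dstar u, X.card ≤ W.card) {Y : Finset E} (hYX : Y ⊆ X) {x : E}
    (hxX : x ∈ X) (hxY : x ∉ Y) : u Y < u (insert x Y) := by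
  have herase := erase_lt_of_mem_Dstar_of_card_min hX hmin hxX
  rcases hu.exchange_of_subset hYX hxX hxY with h | h | ⟨h, -⟩
  · exact absurd h herase.not_gt
  · exact h
  · exact absurd h herase.ne'

theorem every_ordering_of_min_maximizer_increasing_general
    {E : Type*} [DecidableEq E]
    (u : Finset E → ℝ) (hu : OrdinalConcave u)
    (X : Finset E) (hX : X ∈ Dstar u)
    (hmin : ∀ W ∈ Dstar u, X.card ≤ W.card)
    (L : List E) (hnd : L.Nodup) (hL : L.toFinset = X) :
    ∀ i < L.length, u (L.take i).toFinset < u (L.take (i + 1)).toFinset := by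
  intro i hi
  subst hL
  rw [L.toFinset_take_add_one hi]
  refine hu.lt_insert_of_subset_of_mem_Dstar hX hmin ?_ ?_ ?_
  · exact fun _ ha => List.mem_toFinset.2 (List.mem_of_mem_take (List.mem_toFinset.1 ha))
  · exact List.mem_toFinset.2 (List.getElem_mem hi)
  · exact mt List.mem_toFinset.1 (hnd.getElem_notMem_take hi)

theorem every_ordering_of_min_maximizer_increasing
    {E : Type*} [DecidableEq E] [Fintype E]
    (u : Finset E → ℝ) (hu : OrdinalConcave u)
    (X : Finset E) (hX : X ∈ Dstar u)
    (hmin : ∀ W ∈ Dstar u, X.card ≤ W.card)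
    (L : List E) (hnd : L.Nodup) (hL : L.toFinset = X) :
    ∀ i < L.length, u (L.take i).toFinset < u (L.take (i + 1)).toFinset :=
  every_ordering_of_min_maximizer_increasing_general u hu X hX hmin L hnd hL
end OrdConc
end

section
/- Let u : 2^E → ℝ be an ordinally concave function on the subsets of a finite set E. Suppose x* ∈ E satisfies u({x*}) ≥ u({x}) for all x ∈ E and u({x*}) > u(∅). Then there exists a global maximizer U ∈ D*_u with x* ∈ U. -/
namespace OrdConc

variable {E : Type*} [DecidableEq E]

theorem exists_maximizer_containing_best_singleton
    {E : Type*} [DecidableEq E] [Fintype E]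
    (u : Finset E → ℝ) (hu : OrdinalConcave u)
    (xs : E) (hmax : ∀ x : E, u {x} ≤ u {xs}) (hpos : u ∅ < u {xs}) :
    ∃ U ∈ Dstar u, xs ∈ U := by
  obtain ⟨U, -, hU⟩ := Finset.exists_max_image (Finset.univ : Finset (Finset E)) u
    ⟨∅, Finset.mem_univ _⟩
  have hUmax : U ∈ Dstar u := fun Z => hU Z (Finset.mem_univ _)
  by_cases hxs : xs ∈ U
  · exact ⟨U, hUmax, hxs⟩
  · obtain ⟨x', hmem, hcase⟩ := hu {xs} U xs (by simp [hxs])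
    rcases hcase with h1 | h2 | ⟨_, h3⟩
    · exfalso
      have : move {xs} (some xs) x' = add ∅ x' := by
        simp [move, rem, Finset.erase_singleton]
      rw [this] at h1
      cases x' with
      | none => simp [add] at h1; linarith
      | some a =>
        have := hmax a
        simp [add] at h1
        linarith
    · exact absurd (hUmax _) (not_le.mpr h2)
    · refine ⟨move U x' (some xs), ?_, ?_⟩
      · intro Z; rw [← h3]; exact hUmax Z
      · simp [move, add]
end OrdConc
end

section
/- Let u : 2^E → ℝ be an ordinally concave function on the subsets of a finite set E. Then for every X, Y ⊆ E and every U ∈ C_u(X) there exists Z ∈ C_u(X ∪ Y) such that Z ∩ X ⊆ U. -/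
namespace OrdConc

variable {E : Type*} [DecidableEq E]

theorem substitutability_I {E : Type*} [DecidableEq E] [Fintype E]
    (u : Finset E → ℝ) (hu : OrdinalConcave u)
    (X Y U : Finset E) (hU : U ∈ Cu u X) :
    ∃ Z ∈ Cu u (X ∪ Y), Z ∩ X ⊆ U := by
  classical
  obtain ⟨hUX, hUmax⟩ := hU
  set P : Finset (Finset E) := (X ∪ Y).powerset with hP
  have hPne : P.Nonempty := ⟨∅, Finset.mem_powerset.mpr (Finset.empty_subset _)⟩
  obtain ⟨Z0, hZ0P, hZ0max⟩ := P.exists_max_image u hPne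
  set M : Finset (Finset E) := P.filter (fun Z => ∀ W ∈ P, u W ≤ u Z) with hM
  have hMne : M.Nonempty := ⟨Z0, by simp only [hM, Finset.mem_filter]; exact ⟨hZ0P, hZ0max⟩⟩
  obtain ⟨Z, hZM, hZmin⟩ := M.exists_min_image (fun Z => ((Z ∩ X) \ U).card) hMne
  have hZP : Z ∈ P := (Finset.mem_filter.mp hZM).1
  have hZmax : ∀ W ∈ P, u W ≤ u Z := (Finset.mem_filter.mp hZM).2
  have hZsub : Z ⊆ X ∪ Y := Finset.mem_powerset.mp hZP
  refine ⟨Z, ⟨hZsub, fun W hW => hZmax W (Finset.mem_powerset.mpr hW)⟩, ?_⟩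
  by_contra hnot
  obtain ⟨x, hxZX, hxU⟩ : ∃ x ∈ Z ∩ X, x ∉ U := by
    by_contra h; push_neg at h; exact hnot (fun a ha => h a ha)
  have hxZ : x ∈ Z := (Finset.mem_inter.mp hxZX).1
  have hxX : x ∈ X := (Finset.mem_inter.mp hxZX).2
  obtain ⟨x', hx'mem, hcases⟩ := hu Z U x (Finset.mem_sdiff.mpr ⟨hxZ, hxU⟩)
  set Z' : Finset E := move Z (some x) x' with hZ'
  set U' : Finset E := move U x' (some x) with hU'
  have hZ'sub : Z' ⊆ X ∪ Y := by
    cases x' with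
    | none => simp only [hZ', move, add, rem, Option.elim]
              exact (Finset.erase_subset _ _).trans hZsub
    | some a =>
        have ha : a ∈ U := (Finset.mem_sdiff.mp (hx'mem a rfl)).1
        simp only [hZ', move, add, rem, Option.elim]
        exact Finset.insert_subset (Finset.mem_union_left _ (hUX ha))
          ((Finset.erase_subset _ _).trans hZsub)
  have hU'sub : U' ⊆ X := by
    cases x' with
    | none => simp only [hU', move, add, rem, Option.elim]
              exact Finset.insert_subset hxX hUX
    | some a =>
        simp only [hU', move, add, rem, Option.elim]
        exact Finset.insert_subset hxX ((Finset.erase_subset _ _).trans hUX)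
  have hne : ¬ u Z < u Z' := not_lt.mpr (hZmax Z' (Finset.mem_powerset.mpr hZ'sub))
  have hne2 : ¬ u U < u U' := not_lt.mpr (hUmax U' hU'sub)
  rcases hcases with h | h | ⟨hZeq, _⟩
  · exact hne h
  · exact hne2 h
  · have hZ'M : Z' ∈ M := Finset.mem_filter.mpr
      ⟨Finset.mem_powerset.mpr hZ'sub, fun W hW => (hZmax W hW).trans_eq hZeq⟩
    have hsub : (Z' ∩ X) \ U ⊆ ((Z ∩ X) \ U).erase x := by
      intro b hb
      obtain ⟨hbZX, hbU⟩ := Finset.mem_sdiff.mp hb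
      obtain ⟨hbZ', hbX⟩ := Finset.mem_inter.mp hbZX
      have hbZx : b ∈ Z.erase x := by
        cases x' with
        | none => simpa [hZ', move, add, rem] using hbZ'
        | some a =>
            have ha : a ∈ U := (Finset.mem_sdiff.mp (hx'mem a rfl)).1
            have : b = a ∨ b ∈ Z.erase x := by
              simpa [hZ', move, add, rem] using hbZ'
            rcases this with rfl | h
            · exact absurd ha hbU
            · exact h
      exact Finset.mem_erase.mpr ⟨(Finset.mem_erase.mp hbZx).1,
        Finset.mem_sdiff.mpr ⟨Finset.mem_inter.mpr ⟨(Finset.mem_erase.mp hbZx).2, hbX⟩, hbU⟩⟩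
    have hxmem : x ∈ (Z ∩ X) \ U := Finset.mem_sdiff.mpr ⟨hxZX, hxU⟩
    have hlt : ((Z' ∩ X) \ U).card < ((Z ∩ X) \ U).card :=
      lt_of_le_of_lt (Finset.card_le_card hsub)
        (Finset.card_erase_lt_of_mem hxmem)
    exact absurd (hZmin Z' hZ'M) (not_le.mpr hlt)
end OrdConc
end

section
/- Let u : 2^E → ℝ be an ordinally concave function on the subsets of a finite set E. Then for every X, Y ⊆ E and every Z ∈ C_u(X ∪ Y) there exists U ∈ C_u(X) such that Z ∩ X ⊆ U. -/
namespace OrdConc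

variable {E : Type*} [DecidableEq E]

theorem substitutability_II {E : Type*} [DecidableEq E] [Fintype E]
    (u : Finset E → ℝ) (hu : OrdinalConcave u)
    (X Y Z : Finset E) (hZ : Z ∈ Cu u (X ∪ Y)) :
    ∃ U ∈ Cu u X, Z ∩ X ⊆ U := by
  classical
  obtain ⟨hZsub, hZmax⟩ := hZ
  -- the finset of maximizers of u over subsets of X
  set S : Finset (Finset E) :=
    X.powerset.filter (fun W => ∀ V ∈ X.powerset, u V ≤ u W) with hS
  have hSne : S.Nonempty := by
    obtain ⟨W, hW, hWmax⟩ := X.powerset.exists_max_image u ⟨∅, by simp⟩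
    exact ⟨W, Finset.mem_filter.2 ⟨hW, hWmax⟩⟩
  obtain ⟨U, hUS, hUmin⟩ := S.exists_min_image (fun W => ((Z ∩ X) \ W).card) hSne
  have hUX : U ⊆ X := Finset.mem_powerset.1 (Finset.mem_filter.1 hUS).1
  have hUmax : ∀ V ⊆ X, u V ≤ u U := fun V hV =>
    (Finset.mem_filter.1 hUS).2 V (Finset.mem_powerset.2 hV)
  refine ⟨U, ⟨hUX, hUmax⟩, ?_⟩
  by_contra hcon
  obtain ⟨x, hxZX, hxU⟩ : ∃ x, x ∈ Z ∩ X ∧ x ∉ U := by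
    by_contra h; push_neg at h; exact hcon fun a ha => h a ha
  have hxZ : x ∈ Z := (Finset.mem_inter.1 hxZX).1
  have hxX : x ∈ X := (Finset.mem_inter.1 hxZX).2
  obtain ⟨x', hx'mem, hcase⟩ := hu Z U x (Finset.mem_sdiff.2 ⟨hxZ, hxU⟩)
  -- move Z (some x) x' ⊆ X ∪ Y
  have hmZ : move Z (some x) x' ⊆ X ∪ Y := by
    cases x' with
    | none =>
        simp only [move, add, rem, Option.elim]
        exact (Finset.erase_subset _ _).trans hZsub
    | some a =>
        have haU : a ∈ U := (Finset.mem_sdiff.1 (hx'mem a rfl)).1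
        simp only [move, add, rem, Option.elim]
        exact Finset.insert_subset (Finset.mem_union_left _ (hUX haU))
          ((Finset.erase_subset _ _).trans hZsub)
  -- move U x' (some x) ⊆ X
  have hmU : move U x' (some x) ⊆ X := by
    cases x' with
    | none =>
        simp only [move, add, rem, Option.elim]
        exact Finset.insert_subset hxX hUX
    | some a =>
        simp only [move, add, rem, Option.elim]
        exact Finset.insert_subset hxX ((Finset.erase_subset _ _).trans hUX)
  rcases hcase with h1 | h2 | ⟨h3, h4⟩
  · exact absurd (hZmax _ hmZ) (not_le.2 h1)
  · exact absurd (hUmax _ hmU) (not_le.2 h2)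
  · -- U' := move U x' (some x) is also a maximizer, closer to Z ∩ X
    set U' : Finset E := move U x' (some x) with hU'
    have hU'S : U' ∈ S := by
      refine Finset.mem_filter.2 ⟨Finset.mem_powerset.2 hmU, fun V hV => ?_⟩
      rw [← h4]; exact (Finset.mem_filter.1 hUS).2 V hV
    have hsubset : (Z ∩ X) \ U' ⊆ ((Z ∩ X) \ U).erase x := by
      intro b hb
      obtain ⟨hbZX, hbU'⟩ := Finset.mem_sdiff.1 hb
      have hbx : b ≠ x := by
        rintro rfl
        exact hbU' (by
          cases x' <;> simp [hU', move, add, rem, Option.elim])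
      refine Finset.mem_erase.2 ⟨hbx, Finset.mem_sdiff.2 ⟨hbZX, fun hbU => ?_⟩⟩
      cases x' with
      | none =>
          exact hbU' (by simp [hU', move, add, rem, Option.elim, hbU])
      | some a =>
          have haZ : a ∉ Z := (Finset.mem_sdiff.1 (hx'mem a rfl)).2
          have hba : b ≠ a := by
            rintro rfl; exact haZ (Finset.mem_inter.1 hbZX).1
          exact hbU' (by
            simp [hU', move, add, rem, Option.elim]
            exact Or.inr ⟨hba, hbU⟩)
    have hxmem : x ∈ (Z ∩ X) \ U := Finset.mem_sdiff.2 ⟨hxZX, hxU⟩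
    have hlt : ((Z ∩ X) \ U').card < ((Z ∩ X) \ U).card := by
      calc ((Z ∩ X) \ U').card ≤ (((Z ∩ X) \ U).erase x).card :=
            Finset.card_le_card hsubset
        _ < ((Z ∩ X) \ U).card := Finset.card_erase_lt_of_mem hxmem
    exact absurd (hUmin U' hU'S) (not_le.2 hlt)
end OrdConc
end

section
/- Let u : 2^E → ℝ be an ordinally concave function on the subsets of a finite set E satisfying the unique-maximizer condition (UM), and let C : 2^E → 2^E be the (unique) choice function associated with u, i.e., C(X) is the unique element of C_u(X) for each X ⊆ E. Then C is path-independent: for every X, Y ⊆ E, C(X ∪ Y) = C(C(X) ∪ Y). -/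
namespace OrdConc

variable {E : Type*} [DecidableEq E]

theorem path_independent_choice {E : Type*} [DecidableEq E] [Fintype E]
    (u : Finset E → ℝ) (hu : OrdinalConcave u)
    (hUM : ∀ X : Finset E, ∃! Z : Finset E, Z ∈ Cu u X)
    (C : Finset E → Finset E) (hC : ∀ X : Finset E, Cu u X = {C X}) :
    ∀ X Y : Finset E, C (X ∪ Y) = C (C X ∪ Y) := by
  intro X Y
  have hmem : ∀ S : Finset E, C S ∈ Cu u S := by
    intro S
    have : C S ∈ ({C S} : Set (Finset E)) := rfl
    rw [← hC] at this; exact this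
  have hsubC : ∀ S : Finset E, C S ⊆ S := fun S => (hmem S).1
  have hle : ∀ S Z : Finset E, Z ⊆ S → u Z ≤ u (C S) := fun S Z h => (hmem S).2 Z h
  have hstrict : ∀ S Z : Finset E, Z ⊆ S → Z ≠ C S → u Z < u (C S) := by
    intro S Z hZ hne
    rcases lt_or_eq_of_le (hle S Z hZ) with h | h
    · exact h
    · exfalso; apply hne
      have hz : Z ∈ Cu u S := ⟨hZ, fun W hW => h ▸ hle S W hW⟩
      rw [hC] at hz; exact hz
  set A := C (X ∪ Y) with hAdef
  set B := C X with hBdef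
  have hAsub : A ⊆ B ∪ Y := by
    intro a ha
    by_cases hY : a ∈ Y
    · exact Finset.mem_union_right _ hY
    by_cases hB : a ∈ B
    · exact Finset.mem_union_left _ hB
    exfalso
    have haX : a ∈ X := by
      rcases Finset.mem_union.1 (hsubC (X ∪ Y) ha) with h | h
      · exact h
      · exact absurd h hY
    obtain ⟨x', hx'mem, hcase⟩ := hu A B a (Finset.mem_sdiff.2 ⟨ha, hB⟩)
    have h1sub : move A (some a) x' ⊆ X ∪ Y := by
      intro z hz
      cases x' with
      | none =>
        exact hsubC (X ∪ Y) (Finset.erase_subset _ _ hz)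
      | some b =>
        have hb : b ∈ B \ A := hx'mem b rfl
        simp only [move, add, rem, Option.elim] at hz
        rcases Finset.mem_insert.1 hz with h | h
        · subst h
          exact Finset.mem_union_left _ (hsubC X (Finset.mem_sdiff.1 hb).1)
        · exact hsubC (X ∪ Y) (Finset.erase_subset _ _ h)
    have h1ne : move A (some a) x' ≠ A := by
      intro h
      have haM : a ∉ move A (some a) x' := by
        cases x' with
        | none => exact Finset.notMem_erase a A
        | some b =>
          have hb : b ∈ B \ A := hx'mem b rfl
          have hba : b ≠ a := by
            intro hba; exact (Finset.mem_sdiff.1 hb).2 (hba ▸ ha)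
          simp only [move, add, rem, Option.elim]
          intro hmem'
          rcases Finset.mem_insert.1 hmem' with h' | h'
          · exact hba h'.symm
          · exact Finset.notMem_erase a A h'
      exact haM (h.symm ▸ ha)
    have h2sub : move B x' (some a) ⊆ X := by
      intro z hz
      simp only [move, add, Option.elim] at hz
      rcases Finset.mem_insert.1 hz with h | h
      · subst h; exact haX
      · cases x' with
        | none => exact hsubC X h
        | some b => exact hsubC X (Finset.erase_subset _ _ h)
    have h2ne : move B x' (some a) ≠ B := by
      intro h
      apply hB
      rw [← h]
      simp only [move, add, Option.elim]
      exact Finset.mem_insert_self a _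
    have lt1 : u (move A (some a) x') < u A := hstrict (X ∪ Y) _ h1sub h1ne
    have lt2 : u (move B x' (some a)) < u B := hstrict X _ h2sub h2ne
    rcases hcase with h | h | ⟨h1, h2⟩
    · linarith
    · linarith
    · linarith
  have hBYsub : B ∪ Y ⊆ X ∪ Y := Finset.union_subset_union (hsubC X) (subset_refl Y)
  have hA : A ∈ Cu u (B ∪ Y) := ⟨hAsub, fun W hW => hle (X ∪ Y) W (hW.trans hBYsub)⟩
  rw [hC] at hA
  exact hA
end OrdConc
end

section
/- Let u : 2^E → ℝ be an ordinally w-concave function on the subsets of a finite set E, and let U ⊆ E. If X, Y ⊆ E satisfy U ∈ C_u(X) and U ∈ C_u(Y), then U ∈ C_u(X ∪ Y). -/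
namespace OrdConc

variable {E : Type*} [DecidableEq E]

lemma mem_of_mem_move {Z : Finset E} {x x' : Option E} {e : E}
    (h : e ∈ move Z x x') : e ∈ Z ∨ x' = some e := by
  cases x' with
  | none =>
    cases x with
    | none => exact Or.inl h
    | some a => exact Or.inl (Finset.mem_of_mem_erase h)
  | some b =>
    rcases Finset.mem_insert.mp h with h | h
    · exact Or.inr (by rw [h])
    · cases x with
      | none => exact Or.inl h
      | some a => exact Or.inl (Finset.mem_of_mem_erase h)

lemma sd_ssubset {Z U : Finset E} {x x' : Option E} (hne : x ≠ x')
    (hx : mem? x (Z \ U)) (hx' : mem? x' (U \ Z)) :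
    (U \ move Z x x' ∪ move Z x x' \ U) ⊂ (U \ Z ∪ Z \ U) := by
  cases x with
  | none =>
    cases x' with
    | none => exact absurd rfl hne
    | some b =>
      have hb := hx' b rfl
      simp only [Finset.mem_sdiff] at hb
      have hsub : (U \ move Z none (some b) ∪ move Z none (some b) \ U)
          ⊆ (U \ Z ∪ Z \ U) := by
        intro e he
        simp only [move, add, rem, Option.elim, Finset.mem_union, Finset.mem_sdiff,
          Finset.mem_insert] at he ⊢
        rcases he with ⟨heU, he⟩ | ⟨he, heU⟩
        · exact Or.inl ⟨heU, fun h => he (Or.inr h)⟩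
        · rcases he with rfl | he
          · exact absurd hb.1 heU
          · exact Or.inr ⟨he, heU⟩
      rw [Finset.ssubset_iff_of_subset hsub]
      refine ⟨b, ?_, ?_⟩
      · exact Finset.mem_union_left _ (Finset.mem_sdiff.mpr hb)
      · simp only [move, add, rem, Option.elim, Finset.mem_union, Finset.mem_sdiff,
          Finset.mem_insert]
        tauto
  | some a =>
    have ha := hx a rfl
    simp only [Finset.mem_sdiff] at ha
    cases x' with
    | none =>
      have hsub : (U \ move Z (some a) none ∪ move Z (some a) none \ U)
          ⊆ (U \ Z ∪ Z \ U) := by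
        intro e he
        simp only [move, add, rem, Option.elim, Finset.mem_union, Finset.mem_sdiff,
          Finset.mem_erase] at he ⊢
        rcases he with ⟨heU, he⟩ | ⟨⟨_, he⟩, heU⟩
        · by_cases hea : e = a
          · exact absurd (hea ▸ heU) ha.2
          · exact Or.inl ⟨heU, fun h => he ⟨hea, h⟩⟩
        · exact Or.inr ⟨he, heU⟩
      rw [Finset.ssubset_iff_of_subset hsub]
      refine ⟨a, ?_, ?_⟩
      · exact Finset.mem_union_right _ (Finset.mem_sdiff.mpr ha)
      · simp only [move, add, rem, Option.elim, Finset.mem_union, Finset.mem_sdiff,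
          Finset.mem_erase]
        tauto
    | some b =>
      have hb := hx' b rfl
      simp only [Finset.mem_sdiff] at hb
      have hsub : (U \ move Z (some a) (some b) ∪ move Z (some a) (some b) \ U)
          ⊆ (U \ Z ∪ Z \ U) := by
        intro e he
        simp only [move, add, rem, Option.elim, Finset.mem_union, Finset.mem_sdiff,
          Finset.mem_erase, Finset.mem_insert] at he ⊢
        rcases he with ⟨heU, he⟩ | ⟨he, heU⟩
        · by_cases hea : e = a
          · exact absurd (hea ▸ heU) ha.2
          · exact Or.inl ⟨heU, fun h => he (Or.inr ⟨hea, h⟩)⟩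
        · rcases he with rfl | ⟨_, he⟩
          · exact absurd hb.1 heU
          · exact Or.inr ⟨he, heU⟩
      rw [Finset.ssubset_iff_of_subset hsub]
      refine ⟨a, ?_, ?_⟩
      · exact Finset.mem_union_right _ (Finset.mem_sdiff.mpr ha)
      · have hab : a ≠ b := fun h => ha.2 (h ▸ hb.1)
        simp only [move, add, rem, Option.elim, Finset.mem_union, Finset.mem_sdiff,
          Finset.mem_erase, Finset.mem_insert]
        tauto

theorem chosen_in_union {E : Type*} [DecidableEq E] [Fintype E]
    (u : Finset E → ℝ) (hu : OrdinalWeakConcave u)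
    (U X Y : Finset E) (hX : U ∈ Cu u X) (hY : U ∈ Cu u Y) :
    U ∈ Cu u (X ∪ Y) := by
  obtain ⟨hUX, hmaxX⟩ := hX
  obtain ⟨hUY, hmaxY⟩ := hY
  refine ⟨hUX.trans Finset.subset_union_left, ?_⟩
  by_contra hcon
  push_neg at hcon
  obtain ⟨W0, hW0sub, hW0⟩ := hcon
  set T := (X ∪ Y).powerset.filter (fun W => u U < u W) with hT
  have hT0 : W0 ∈ T := by
    simp only [hT, Finset.mem_filter, Finset.mem_powerset]
    exact ⟨hW0sub, hW0⟩
  obtain ⟨Z, hZT, hZmin⟩ := T.exists_min_image (fun W => sdCard U W) ⟨W0, hT0⟩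
  simp only [hT, Finset.mem_filter, Finset.mem_powerset] at hZT
  obtain ⟨hZsub, hZu⟩ := hZT
  have hZne : Z ≠ U := fun h => absurd hZu (by simp [h])
  obtain ⟨x, x', hxx', hx, hx', hcase⟩ := hu Z U hZne
  have hmovesub : move Z x x' ⊆ X ∪ Y := by
    intro e he
    rcases mem_of_mem_move he with he | he
    · exact hZsub he
    · exact Finset.mem_union_left _ (hUX (Finset.mem_sdiff.mp (hx' e he)).1)
  have hsd : sdCard U (move Z x x') < sdCard U Z :=
    Finset.card_lt_card (sd_ssubset hxx' hx hx')
  have hnotT : ∀ (h : u U < u (move Z x x')), False := by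
    intro h
    have hmem : move Z x x' ∈ T := by
      simp only [hT, Finset.mem_filter, Finset.mem_powerset]
      exact ⟨hmovesub, h⟩
    exact absurd (hZmin _ hmem) (by omega)
  rcases hcase with h | h | ⟨h1, _⟩
  · exact hnotT (hZu.trans h)
  · -- u U < u (move U x' x) : contradict optimality over X or Y
    have hUsub : ∀ {S : Finset E}, U ⊆ S → (∀ a : E, x = some a → a ∈ S) →
        move U x' x ⊆ S := by
      intro S hUS hxS e he
      rcases mem_of_mem_move he with he | he
      · exact hUS he
      · exact hxS e he
    cases x with
    | none =>
      have := hmaxX _ (hUsub hUX (fun a ha => by cases ha))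
      linarith
    | some a =>
      have haZ : a ∈ Z := (Finset.mem_sdiff.mp (hx a rfl)).1
      rcases Finset.mem_union.mp (hZsub haZ) with haX | haY
      · have := hmaxX _ (hUsub hUX (fun b hb => by cases hb; exact haX))
        linarith
      · have := hmaxY _ (hUsub hUY (fun b hb => by cases hb; exact haY))
        linarith
  · exact hnotT (h1 ▸ hZu)
end OrdConc
end
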